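/- arXiv:1011.0019 — 6 statements merged into one kernel-verified Lean document; each statement's English description precedes it below -/
import Mathlib

section
/- Volume packing lemma. Let d, t ≥ 1, let B be a positive integer, let K ⊂ ℝ^d be a convex body contained in some translate of [−B, B]^d, let Ψ = (ψ_1, …, ψ_t) : ℤ^d → ℤ^t be a system of affine-linear forms, and let d_1, …, d_t be positive integers. Then Σ_{n ∈ ℤ^d ∩ K} ∏_{i=1}^t 1_{d_i | ψ_i(n)} = vol(K) · α(d_1, …, d_t) + O(B^{d−1} lcm(d_1, …, d_t)), where the implied constant depends only on d. -/
open MeasureTheory Finset Filter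
open scoped Classical BigOperators

noncomputable section

namespace DivisorCorr

/-- Value of the `i`-th affine-linear form (with linear coefficients `A` and
constant terms `b`) at an integer point `n`. -/
def psiZ {d t : ℕ} (A : Fin t → Fin d → ℤ) (b : Fin t → ℤ) (i : Fin t) (n : Fin d → ℤ) : ℤ :=
  ∑ j, A i j * n j + b i

/-- Value of the `i`-th affine-linear form at a real point `x`. -/
def psiR {d t : ℕ} (A : Fin t → Fin d → ℤ) (b : Fin t → ℤ) (i : Fin t) (x : Fin d → ℝ) : ℝ :=
  ∑ j, (A i j : ℝ) * x j + (b i : ℝ)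

/-- Non-degeneracy conditions for a system of affine-linear forms: no form is constant,
no restriction of the system to a single variable is constant, and no two forms are
rational multiples of each other. -/
def IsSystem {d t : ℕ} (A : Fin t → Fin d → ℤ) (b : Fin t → ℤ) : Prop :=
  (∀ i, ∃ j, A i j ≠ 0) ∧ (∀ j, ∃ i, A i j ≠ 0) ∧
    ∀ i j : Fin t, i ≠ j →
      ¬∃ q r : ℤ, q ≠ 0 ∧ r ≠ 0 ∧ (∀ k, q * A i k = r * A j k) ∧ q * b i = r * b j

/-- All linear coefficients are bounded in absolute value by `L`. -/
def CoeffBound {d t : ℕ} (A : Fin t → Fin d → ℤ) (L : ℕ) : Prop :=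
  ∀ i j, |A i j| ≤ (L : ℤ)

/-- Any two distinct linear parts are linearly independent (over ℚ, equivalently over ℤ). -/
def PairwiseIndep {d t : ℕ} (A : Fin t → Fin d → ℤ) : Prop :=
  ∀ i j : Fin t, i ≠ j → ∀ q r : ℤ, (∀ k, q * A i k + r * A j k = 0) → q = 0 ∧ r = 0

/-- Local divisor density `α(d₁,…,d_t)`. -/
def alphaD {d t : ℕ} (A : Fin t → Fin d → ℤ) (b : Fin t → ℤ) (D : Fin t → ℕ) : ℝ :=
  (((Fintype.piFinset fun _ : Fin d => Finset.range ((univ : Finset (Fin t)).lcm D)).filter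
      fun n => ∀ i, (D i : ℤ) ∣ psiZ A b i fun j => (n j : ℤ)).card : ℝ) /
    ((((univ : Finset (Fin t)).lcm D : ℕ) : ℝ)) ^ d

/-- Local factor `β_p`. -/
def betaP {d t : ℕ} (A : Fin t → Fin d → ℤ) (b : Fin t → ℤ) (p : ℕ) : ℝ :=
  (1 - (p : ℝ)⁻¹) ^ t * ∑' a : Fin t → ℕ, alphaD A b fun i => p ^ a i

/-- The divisor function of an integer. -/
def tauZ (n : ℤ) : ℕ := n.natAbs.divisors.card

/-- The normalised divisor function `τ̃(n) = (log N)⁻¹ Σ_{d ∣ n} 1`. -/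
def tauTilde (N : ℕ) (n : ℤ) : ℝ := (Real.log N)⁻¹ * (tauZ n : ℝ)

/-- The truncated normalised divisor function
`τ̃_γ(n) = (γ log N)⁻¹ Σ_{d ∣ n, d ≤ N^γ} 1`. -/
def tauTildeG (N : ℕ) (γ : ℝ) (n : ℤ) : ℝ :=
  (γ * Real.log N)⁻¹ * (((n.natAbs.divisors.filter (fun e : ℕ => (e : ℝ) ≤ (N : ℝ) ^ γ)).card : ℕ) : ℝ)

/-- The integer points of `K` (assumed to lie in `[-N,N]^d`). -/
def pts (d N : ℕ) (K : Set (Fin d → ℝ)) : Finset (Fin d → ℤ) :=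
  (Fintype.piFinset fun _ : Fin d => Finset.Icc (-(N : ℤ)) (N : ℤ)).filter
    fun n => (fun j => (n j : ℝ)) ∈ K

/-- The integer points of `K` (assumed to lie in the box `∏_j [lo j, hi j]`). -/
def ptsBox {d : ℕ} (lo hi : Fin d → ℤ) (K : Set (Fin d → ℝ)) : Finset (Fin d → ℤ) :=
  (Fintype.piFinset fun j : Fin d => Finset.Icc (lo j) (hi j)).filter
    fun n => (fun j => (n j : ℝ)) ∈ K

/-- `K ⊆ [-N,N]^d`. -/
def InBox (d N : ℕ) (K : Set (Fin d → ℝ)) : Prop :=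
  ∀ x ∈ K, ∀ j, x j ∈ Set.Icc (-(N : ℝ)) (N : ℝ)

/-- `Ψ(K) ⊆ [1,N]^t`. -/
def MapsIn {d t : ℕ} (A : Fin t → Fin d → ℤ) (b : Fin t → ℤ) (N : ℕ)
    (K : Set (Fin d → ℝ)) : Prop :=
  ∀ x ∈ K, ∀ i, psiR A b i x ∈ Set.Icc (1 : ℝ) (N : ℝ)

/-- Two linear parts are linearly dependent modulo `p`. -/
def AffRelMod {d : ℕ} (p : ℕ) (u v : Fin d → ℤ) : Prop :=
  ∃ q r : ℤ, (¬(p : ℤ) ∣ q ∨ ¬(p : ℤ) ∣ r) ∧ ∀ k, (p : ℤ) ∣ (q * u k + r * v k)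

/-- `p` is an exceptional prime for the system with linear coefficients `A`. -/
def Exceptional {d t : ℕ} (A : Fin t → Fin d → ℤ) (p : ℕ) : Prop :=
  ∃ i j : Fin t, i ≠ j ∧ AffRelMod p (A i) (A j)

/-- `S₁`: integers divisible by a proper prime power `p^a > (log N)^{C₁}`. -/
def S1set (N : ℕ) (C₁ : ℝ) : Set ℤ :=
  {m | ∃ p a : ℕ, p.Prime ∧ 2 ≤ a ∧ Real.log N ^ C₁ < (p : ℝ) ^ a ∧ (p : ℤ) ^ a ∣ m}

/-- The `X`-smooth part `∏_{p^a ∥ n, p ≤ X} p^a` of `n`. -/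
def smoothPart (n : ℕ) (X : ℝ) : ℕ :=
  ∏ p ∈ (n.primeFactors.filter (fun p : ℕ => (p : ℝ) ≤ X) : Finset ℕ), p ^ n.factorization p

/-- `S₂`: positive "smooth" integers `m` with
`∏_{p^a ∥ m, p ≤ N^{1/(log log N)³}} p^a ≥ N^{γ / log log N}`. -/
def S2set (N : ℕ) (γ : ℝ) : Set ℤ :=
  {m | 0 < m ∧ (N : ℝ) ^ (γ / Real.log (Real.log N)) ≤
      (smoothPart m.natAbs ((N : ℝ) ^ ((Real.log (Real.log N)) ^ 3)⁻¹) : ℝ)}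

/-- `m₀(i,s) = ⌈γ s (i + 3 - log₂ s)/100⌉`. -/
def mSmall (γ : ℝ) (s i : ℕ) : ℕ := ⌈γ * s * ((i : ℝ) + 3 - Real.logb 2 s) / 100⌉₊

/-- Membership in `U(i,s)`: products of `m₀(i,s)` distinct primes from
`[N^{1/2^{i+1}}, N^{1/2^i}]`. -/
def inU (N : ℕ) (γ : ℝ) (s i : ℕ) (u : ℕ) : Prop :=
  Squarefree u ∧ u.primeFactors.card = mSmall γ s i ∧
    ∀ p ∈ u.primeFactors,
      (N : ℝ) ^ (((2 : ℝ) ^ (i + 1))⁻¹) ≤ (p : ℝ) ∧ (p : ℝ) ≤ (N : ℝ) ^ (((2 : ℝ) ^ i)⁻¹)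

/-- `X(i,s)`: positive integers `n ≤ N` divisible by at least `m₀(i,s)` distinct primes
from `[N^{1/2^{i+1}}, N^{1/2^i}]`. -/
def clusterSet (N : ℕ) (γ : ℝ) (s i : ℕ) : Finset ℕ :=
  (Finset.Icc 1 N).filter fun n =>
    mSmall γ s i ≤ (n.primeFactors.filter fun p =>
      (N : ℝ) ^ (((2 : ℝ) ^ (i + 1))⁻¹) ≤ (p : ℝ) ∧ (p : ℝ) ≤ (N : ℝ) ^ (((2 : ℝ) ^ i)⁻¹)).card

/-- The triple sum `Σ_{s=2g+1}^{(log log N)³} Σ_{log₂ s - 2 ≤ i ≤ 6 log log log N}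
Σ_{u ∈ U(i,s)} 2^s 1_{u ∣ n} tg(n)` appearing in the majorants. -/
def nuTail (N : ℕ) (γ : ℝ) (g : ℕ) (tg : ℤ → ℝ) (n : ℤ) : ℝ :=
  ∑ s ∈ Finset.Icc (2 * g + 1) ⌊(Real.log (Real.log N)) ^ 3⌋₊,
    ∑ i ∈ Finset.range (⌊6 * Real.log (Real.log (Real.log N))⌋₊ + 1),
      if Real.logb 2 (s : ℝ) - 2 ≤ (i : ℝ) then
        (2 : ℝ) ^ s * (((n.natAbs.divisors.filter (inU N γ s i)).card : ℕ) : ℝ) * tg n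
      else 0

/-- The majorant `ν₀` for the normalised divisor function, with `γ = 1/g`. -/
def nu0 (N g : ℕ) (C₁ : ℝ) (n : ℤ) : ℝ :=
  (2 : ℝ) ^ (2 * g) * tauTildeG N (g : ℝ)⁻¹ n +
    nuTail N (g : ℝ)⁻¹ g (tauTildeG N (g : ℝ)⁻¹) n +
    if n ∈ S1set N C₁ ∪ S2set N (g : ℝ)⁻¹ then tauTilde N n else 0

/-- `w(N) = (1/2) log log N`. -/
def wN (N : ℕ) : ℝ := Real.log (Real.log N) / 2

/-- Primes `p < w(N)`. -/
def smallPrimes (N : ℕ) : Finset ℕ :=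
  (Finset.range (⌈wN N⌉₊ + 1)).filter fun p : ℕ => p.Prime ∧ (p : ℝ) < wN N

/-- Primes `p ≤ w(N)`. -/
def smallPrimesLe (N : ℕ) : Finset ℕ :=
  (Finset.range (⌈wN N⌉₊ + 1)).filter fun p : ℕ => p.Prime ∧ (p : ℝ) ≤ wN N

/-- `W = ∏_{p < w(N)} p`. -/
def Wp (N : ℕ) : ℕ := ∏ p ∈ smallPrimes N, p

/-- `W̃ = ∏_{p ≤ w(N)} p^{⌊C₁ log_p log N⌋}`. -/
def Wt (N : ℕ) (C₁ : ℝ) : ℕ :=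
  ∏ p ∈ smallPrimesLe N, p ^ ⌊C₁ * (Real.log (Real.log N) / Real.log p)⌋₊

/-- `ϖ(n)`: the `w(N)`-smooth part of `n`. -/
def varpi (N : ℕ) (n : ℕ) : ℕ :=
  ∏ p ∈ (n.primeFactors.filter (fun p : ℕ => (p : ℝ) ≤ wN N) : Finset ℕ), p ^ n.factorization p

/-- The `W`-tricked normalised divisor function
`τ̃'(n) = (W/φ(W)) (log N)⁻¹ Σ_{d ∣ n, (d,W)=1} 1`. -/
def tauW (N : ℕ) (n : ℤ) : ℝ :=
  (Wp N : ℝ) / ((Wp N).totient : ℝ) * (Real.log N)⁻¹ *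
    (((n.natAbs.divisors.filter (fun e => Nat.Coprime e (Wp N))).card : ℕ) : ℝ)

/-- The truncated `W`-tricked normalised divisor function
`τ̃'_γ(n) = (W/φ(W)) (γ log N)⁻¹ Σ_{d ∣ n, d ≤ N^γ, (d,W)=1} 1`. -/
def tauWG (N : ℕ) (γ : ℝ) (n : ℤ) : ℝ :=
  (Wp N : ℝ) / ((Wp N).totient : ℝ) * (γ * Real.log N)⁻¹ *
    (((n.natAbs.divisors.filter (fun e : ℕ =>
        (e : ℝ) ≤ (N : ℝ) ^ γ ∧ Nat.Coprime e (Wp N))).card : ℕ) : ℝ)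

/-- The truncated `W`-tricked majorant `ν₀'`, with `γ = 1/g`. -/
def nu0' (N g : ℕ) (n : ℤ) : ℝ :=
  (2 : ℝ) ^ (2 * g) * tauWG N (g : ℝ)⁻¹ n + nuTail N (g : ℝ)⁻¹ g (tauWG N (g : ℝ)⁻¹) n

/-!
Modulo `m = lcm(d₁, …, d_t)` the conditions `dᵢ ∣ ψᵢ(n)` depend only on the residue `r` of `n`,
and the points of `ℤ^d ∩ K` congruent to `r` correspond to the lattice points of `(K - r) / m`, a
convex body of radius `B / m`. Summing over the `α m^d` admissible residues, the theorem reduces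
to the lattice point count `#(ℤ^d ∩ L) = vol L + O(R^(d-1))` for convex `L` of radius `R ≥ 1`
(when `m > B`, the trivial bound `O(B^d)` suffices).

The count is proved by induction on `d`, slicing `L` along the first coordinate. Each fibre is an
interval, containing as many integers as its length up to `1`. By the layer cake formula, both the
sum of the fibre lengths over `ℤ^(d-1)` and `vol L` are integrals over `t ∈ (0, 2R]`, of the lattice
point count and of the volume of the superlevel set `{fibre length > t}` respectively. These sets
are convex since the fibre length is concave (Brunn's principle), so the induction hypothesis
applies to them.
-/

open Metric Bornology
open scoped Pointwise ENNReal

theorem card_Icc_ceil_floor_le {u v : ℝ} (huv : u ≤ v) :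
    (#(Finset.Icc ⌈u⌉ ⌊v⌋) : ℝ) ≤ v - u + 1 := by
  rw [Int.card_Icc]
  rcases le_or_gt 0 (⌊v⌋ + 1 - ⌈u⌉) with h | h
  · have hcast : (((⌊v⌋ + 1 - ⌈u⌉).toNat : ℤ) : ℝ) = ⌊v⌋ + 1 - ⌈u⌉ := by
      rw [Int.toNat_of_nonneg h]; push_cast; ring
    rw [← Int.cast_natCast, hcast]
    linarith [Int.floor_le v, Int.le_ceil u]
  · rw [Int.toNat_of_nonpos h.le]
    simp only [CharP.cast_eq_zero]
    linarith

theorem sub_sub_one_le_card_Ioo_floor_ceil (u v : ℝ) :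
    v - u - 1 ≤ (#(Finset.Ioo ⌊u⌋ ⌈v⌉) : ℝ) := by
  rw [Int.card_Ioo]
  have h : ((⌈v⌉ - ⌊u⌋ - 1 : ℤ) : ℝ) ≤ (((⌈v⌉ - ⌊u⌋ - 1).toNat : ℤ) : ℝ) := by
    exact_mod_cast Int.self_le_toNat _
  push_cast at h
  linarith [Int.le_ceil v, Int.floor_le u]

theorem toReal_volume_eq_csSup_sub_csInf_of_convex {I : Set ℝ} (hI : Convex ℝ I) (hne : I.Nonempty)
    (hb : IsBounded I) : (volume I).toReal = sSup I - sInf I := by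
  have hIoo := (hI.isConnected hne).Ioo_csInf_csSup_subset hb.bddBelow hb.bddAbove
  have hIcc := subset_Icc_csInf_csSup hb.bddBelow hb.bddAbove
  have hvol : volume I = ENNReal.ofReal (sSup I - sInf I) :=
    le_antisymm (Real.volume_Icc ▸ measure_mono hIcc) (Real.volume_Ioo ▸ measure_mono hIoo)
  rw [hvol, ENNReal.toReal_ofReal (sub_nonneg.2 (csInf_le_csSup hne hb.bddBelow hb.bddAbove))]

theorem abs_ncard_int_sub_volume_le_one {I : Set ℝ} (hI : Convex ℝ I) (hb : IsBounded I) :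
    |((((↑) : ℤ → ℝ) ⁻¹' I).ncard : ℝ) - (volume I).toReal| ≤ 1 := by
  rcases I.eq_empty_or_nonempty with rfl | hne
  · simp
  set u := sInf I
  set v := sSup I
  have hIoo := (hI.isConnected hne).Ioo_csInf_csSup_subset hb.bddBelow hb.bddAbove
  have hIcc := subset_Icc_csInf_csSup hb.bddBelow hb.bddAbove
  have hupper : ((((↑) : ℤ → ℝ) ⁻¹' I).ncard : ℝ) ≤ v - u + 1 := by
    have h := Set.ncard_le_ncard (Set.preimage_mono (f := ((↑) : ℤ → ℝ)) hIcc)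
      (Int.preimage_Icc (R := ℝ) ▸ Set.finite_Icc ⌈u⌉ ⌊v⌋)
    rw [Int.preimage_Icc, ← Finset.coe_Icc, Set.ncard_coe_finset] at h
    exact le_trans (by exact_mod_cast h)
      (card_Icc_ceil_floor_le (csInf_le_csSup hne hb.bddBelow hb.bddAbove))
  have hlower : v - u - 1 ≤ ((((↑) : ℤ → ℝ) ⁻¹' I).ncard : ℝ) := by
    have h := Set.ncard_le_ncard (Set.preimage_mono (f := ((↑) : ℤ → ℝ)) hIoo)
      ((Int.preimage_Icc (R := ℝ) ▸ Set.finite_Icc ⌈u⌉ ⌊v⌋).subset (Set.preimage_mono hIcc))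
    rw [Int.preimage_Ioo, ← Finset.coe_Ioo, Set.ncard_coe_finset] at h
    exact le_trans (sub_sub_one_le_card_Ioo_floor_ceil u v) (by exact_mod_cast h)
  rw [toReal_volume_eq_csSup_sub_csInf_of_convex hI hne hb, abs_le]
  constructor <;> linarith

theorem zpow_sub_one_le_pow_sub_one {x : ℝ} (hx : 1 ≤ x) (d : ℕ) :
    x ^ ((d : ℤ) - 1) ≤ x ^ (d - 1) := by
  rw [← zpow_natCast]
  exact zpow_le_zpow_right₀ hx (by omega)

theorem pow_le_pow_sub_one_mul {x y : ℝ} (hx : 1 ≤ x) (hxy : x ≤ y) (d : ℕ) :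
    x ^ d ≤ x ^ (d - 1) * y :=
  calc x ^ d ≤ x ^ (d - 1 + 1) := pow_le_pow_right₀ hx (by omega)
    _ ≤ x ^ (d - 1) * y := by
      rw [pow_succ]
      gcongr

theorem tsum_ofReal_eq_lintegral_encard {α : Type*} [MeasurableSpace α]
    [MeasurableSingletonClass α] [Countable α] (g : α → ℝ) (hg : 0 ≤ g) :
    ∑' a, ENNReal.ofReal (g a) = ∫⁻ t in Set.Ioi 0, ({a | t < g a}.encard : ℝ≥0∞) := by
  rw [← lintegral_count, lintegral_eq_lintegral_meas_lt _ (ae_of_all _ hg)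
    (measurable_of_countable g).aemeasurable]
  simp only [Measure.count_apply (Set.to_countable _).measurableSet]

theorem abs_toReal_sub_le_of_le_add {a b c : ℝ≥0∞} (hc : c ≠ ∞) (hab : a ≤ b + c)
    (hba : b ≤ a + c) : |a.toReal - b.toReal| ≤ c.toReal := by
  rcases eq_or_ne a ∞ with rfl | ha
  · obtain rfl : b = ∞ := by simpa [hc] using hab
    simp
  have hb : b ≠ ∞ := ne_top_of_le_ne_top (by finiteness) hba
  have h₁ := ENNReal.toReal_mono (by finiteness) hab
  have h₂ := ENNReal.toReal_mono (by finiteness) hba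
  rw [ENNReal.toReal_add hb hc] at h₁
  rw [ENNReal.toReal_add ha hc] at h₂
  rw [abs_sub_le_iff]
  constructor <;> linarith

theorem abs_toReal_setLIntegral_Ioi_sub_le {F G : ℝ → ℝ≥0∞} {M e : ℝ} (hM : 0 ≤ M) (he : 0 ≤ e)
    (hF : ∀ t, M < t → F t = 0) (hG : ∀ t, M < t → G t = 0)
    (hFG : ∀ t ∈ Set.Ioc 0 M, F t ≠ ∞ ∧ G t ≠ ∞ ∧ |(F t).toReal - (G t).toReal| ≤ e) :
    |(∫⁻ t in Set.Ioi 0, F t).toReal - (∫⁻ t in Set.Ioi 0, G t).toReal| ≤ M * e := by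
  have hIoc : ∀ H : ℝ → ℝ≥0∞, (∀ t, M < t → H t = 0) →
      ∫⁻ t in Set.Ioi 0, H t = ∫⁻ t in Set.Ioc 0 M, H t := fun H hH => by
    rw [← Set.Ioc_union_Ioi_eq_Ioi hM, lintegral_union measurableSet_Ioi
      (Set.Ioc_disjoint_Ioi le_rfl), setLIntegral_congr_fun measurableSet_Ioi hH,
      lintegral_zero, add_zero]
  have hle : ∀ H H' : ℝ → ℝ≥0∞, (∀ t ∈ Set.Ioc 0 M, H t ≤ H' t + ENNReal.ofReal e) →
      ∫⁻ t in Set.Ioc 0 M, H t ≤ (∫⁻ t in Set.Ioc 0 M, H' t) + ENNReal.ofReal (M * e) :=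
    fun H H' h => calc
      ∫⁻ t in Set.Ioc 0 M, H t ≤ ∫⁻ t in Set.Ioc 0 M, (H' t + ENNReal.ofReal e) :=
        setLIntegral_mono' measurableSet_Ioc h
      _ = (∫⁻ t in Set.Ioc 0 M, H' t) + ENNReal.ofReal (M * e) := by
        rw [lintegral_add_right _ measurable_const, setLIntegral_const, Real.volume_Ioc, sub_zero,
          ← ENNReal.ofReal_mul he, mul_comm]
  have hpt : ∀ x y : ℝ≥0∞, x ≠ ∞ → y ≠ ∞ → x.toReal - y.toReal ≤ e → x ≤ y + ENNReal.ofReal e :=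
    fun x y hx hy h => by
      rw [← ENNReal.ofReal_toReal hx, ← ENNReal.ofReal_toReal hy,
        ← ENNReal.ofReal_add ENNReal.toReal_nonneg he]
      exact ENNReal.ofReal_le_ofReal (by linarith)
  rw [hIoc F hF, hIoc G hG, ← ENNReal.toReal_ofReal (mul_nonneg hM he)]
  refine abs_toReal_sub_le_of_le_add ENNReal.ofReal_ne_top
    (hle F G fun t ht => ?_) (hle G F fun t ht => ?_)
  · obtain ⟨hFt, hGt, h⟩ := hFG t ht
    exact hpt _ _ hFt hGt (abs_le.1 h).2
  · obtain ⟨hFt, hGt, h⟩ := hFG t ht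
    exact hpt _ _ hGt hFt (by linarith [(abs_le.1 h).1])

def latticePoints {ι : Type*} (K : Set (ι → ℝ)) : Set (ι → ℤ) := {n | (fun i => (n i : ℝ)) ∈ K}

theorem latticePoints_mono {ι : Type*} {K L : Set (ι → ℝ)} (h : K ⊆ L) :
    latticePoints K ⊆ latticePoints L := fun _ hn => h hn

def latticeBox {d : ℕ} (c : Fin d → ℝ) (R : ℝ) : Finset (Fin d → ℤ) :=
  Fintype.piFinset fun j => Finset.Icc ⌈c j - R⌉ ⌊c j + R⌋

section LatticeBox

variable {d : ℕ} {c : Fin d → ℝ} {R : ℝ}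

theorem coe_latticeBox (hR : 0 ≤ R) :
    (latticeBox c R : Set (Fin d → ℤ)) = latticePoints (closedBall c R) := by
  ext n
  simp only [latticeBox, Fintype.coe_piFinset, Set.mem_pi, Set.mem_univ, Finset.coe_Icc,
    Set.mem_Icc, Int.ceil_le, Int.le_floor, forall_const, latticePoints, Set.mem_ofPred_eq,
    mem_closedBall, dist_pi_le_iff hR, Real.dist_eq, abs_sub_le_iff]
  refine forall_congr' fun j => ?_
  constructor <;> rintro ⟨h1, h2⟩ <;> constructor <;> linarith

theorem latticePoints_subset_latticeBox {K : Set (Fin d → ℝ)} (hR : 0 ≤ R)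
    (hK : K ⊆ closedBall c R) :
    latticePoints K ⊆ latticeBox c R :=
  coe_latticeBox hR ▸ latticePoints_mono hK

theorem coe_filter_latticeBox {K : Set (Fin d → ℝ)} (hR : 0 ≤ R)
    (hKc : K ⊆ closedBall c R) :
    (((latticeBox c R).filter fun n => (fun j => (n j : ℝ)) ∈ K : Finset (Fin d → ℤ)) :
      Set (Fin d → ℤ)) = latticePoints K := by
  rw [Finset.coe_filter]
  exact Set.sep_eq_of_subset (latticePoints_subset_latticeBox hR hKc)

theorem card_latticeBox_le (hR : 1 ≤ R) : (#(latticeBox c R) : ℝ) ≤ (3 * R) ^ d := by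
  rw [latticeBox, Fintype.card_piFinset, Nat.cast_prod, ← Fin.prod_const]
  gcongr with j
  calc (#(Finset.Icc ⌈c j - R⌉ ⌊c j + R⌋) : ℝ) ≤ c j + R - (c j - R) + 1 :=
        card_Icc_ceil_floor_le (by linarith)
    _ ≤ 3 * R := by linarith

end LatticeBox

theorem ncard_latticePoints_eq_volume_of_isEmpty {ι : Type*} [Fintype ι] [IsEmpty ι]
    (K : Set (ι → ℝ)) :
    ((latticePoints K).ncard : ℝ) = (volume K).toReal := by
  rcases K.eq_empty_or_nonempty with rfl | hK
  · simp [latticePoints]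
  obtain rfl : K = Set.univ := Subsingleton.eq_univ_of_nonempty hK
  simp [latticePoints, Measure.volume_pi_eq_dirac isEmptyElim]

theorem abs_ncard_latticePoints_sub_volume_le_of_measurableSet {d : ℕ} {c : Fin d → ℝ} {R e : ℝ}
    (hR : 0 ≤ R)
    (h : ∀ L : Set (Fin d → ℝ), Convex ℝ L → MeasurableSet L → L ⊆ closedBall c R →
      |((latticePoints L).ncard : ℝ) - (volume L).toReal| ≤ e)
    {K : Set (Fin d → ℝ)} (hK : Convex ℝ K) (hKc : K ⊆ closedBall c R) :
    |((latticePoints K).ncard : ℝ) - (volume K).toReal| ≤ e := by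
  have hcl : closure K ⊆ closedBall c R := closure_minimal hKc isClosed_closedBall
  have hfin : (latticePoints (closure K)).Finite :=
    (latticeBox c R).finite_toSet.subset (latticePoints_subset_latticeBox hR hcl)
  have hcount_le : (latticePoints K).ncard ≤ (latticePoints (closure K)).ncard :=
    Set.ncard_le_ncard (latticePoints_mono subset_closure) hfin
  have hle_count : (latticePoints (interior K)).ncard ≤ (latticePoints K).ncard :=
    Set.ncard_le_ncard (latticePoints_mono interior_subset)
      (hfin.subset (latticePoints_mono subset_closure))
  have hnull := hK.addHaar_frontier volume
  have hclosure := h _ hK.closure isClosed_closure.measurableSet hcl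
  have hinterior := h _ hK.interior isOpen_interior.measurableSet (interior_subset.trans hKc)
  rw [measure_closure_of_null_frontier hnull] at hclosure
  rw [measure_interior_of_null_frontier hnull] at hinterior
  rw [abs_le] at hclosure hinterior ⊢
  constructor
  · linarith [(Nat.cast_le (α := ℝ)).2 hle_count]
  · linarith [(Nat.cast_le (α := ℝ)).2 hcount_le]

def fiber {d : ℕ} (K : Set (Fin (d + 1) → ℝ)) (x : Fin d → ℝ) : Set ℝ :=
  {y | (Fin.cons y x : Fin (d + 1) → ℝ) ∈ K}

section Fiber

variable {d : ℕ} {K : Set (Fin (d + 1) → ℝ)}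

theorem fiber_subset_closedBall {c : Fin (d + 1) → ℝ} {R : ℝ} (hKc : K ⊆ closedBall c R)
    (x : Fin d → ℝ) : fiber K x ⊆ closedBall (c 0) R := fun y hy => by
  simpa using (dist_le_pi_dist _ c 0).trans (hKc hy)

theorem mem_closedBall_tail_of_fiber_nonempty {c : Fin (d + 1) → ℝ} {R : ℝ}
    (hKc : K ⊆ closedBall c R) {x : Fin d → ℝ} (hx : (fiber K x).Nonempty) :
    x ∈ closedBall (Fin.tail c) R := by
  obtain ⟨y, hy⟩ := hx
  have h := mem_closedBall.1 (hKc hy)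
  have hR : 0 ≤ R := dist_nonneg.trans h
  rw [dist_pi_le_iff hR] at h
  rw [mem_closedBall, dist_pi_le_iff hR]
  exact fun j => by simpa [Fin.tail] using h j.succ

theorem isBounded_fiber (hKb : IsBounded K) (x : Fin d → ℝ) : IsBounded (fiber K x) :=
  ((LipschitzWith.eval 0).isBounded_image hKb).subset fun _ hy => ⟨_, hy, rfl⟩

theorem smul_fiber_add_smul_fiber_subset (hK : Convex ℝ K) {a b : ℝ} (ha : 0 ≤ a) (hb : 0 ≤ b)
    (hab : a + b = 1) (x₁ x₂ : Fin d → ℝ) :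
    a • fiber K x₁ + b • fiber K x₂ ⊆ fiber K (a • x₁ + b • x₂) := by
  rintro _ ⟨_, ⟨y₁, hy₁, rfl⟩, _, ⟨y₂, hy₂, rfl⟩, rfl⟩
  have hcons : a • (Fin.cons y₁ x₁ : Fin (d + 1) → ℝ) + b • Fin.cons y₂ x₂ =
      Fin.cons (a * y₁ + b * y₂) (a • x₁ + b • x₂) := by
    ext j
    refine Fin.cases ?_ (fun j => ?_) j <;> simp
  simpa [fiber, hcons] using hK hy₁ hy₂ ha hb hab

theorem convex_fiber (hK : Convex ℝ K) (x : Fin d → ℝ) : Convex ℝ (fiber K x) := by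
  intro y₁ hy₁ y₂ hy₂ a b ha hb hab
  simpa [← add_smul, hab] using
    smul_fiber_add_smul_fiber_subset hK ha hb hab x x ⟨_, ⟨y₁, hy₁, rfl⟩, _, ⟨y₂, hy₂, rfl⟩, rfl⟩

theorem concaveOn_toReal_volume_fiber (hK : Convex ℝ K) (hKb : IsBounded K) :
    ConcaveOn ℝ {x | (fiber K x).Nonempty} (fun x => (volume (fiber K x)).toReal) := by
  refine ⟨fun x₁ ⟨y₁, hy₁⟩ x₂ ⟨y₂, hy₂⟩ a b ha hb hab =>
    ⟨_, smul_fiber_add_smul_fiber_subset hK ha hb hab x₁ x₂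
      ⟨_, ⟨y₁, hy₁, rfl⟩, _, ⟨y₂, hy₂, rfl⟩, rfl⟩⟩,
    fun x₁ hx₁ x₂ hx₂ a b ha hb hab => ?_⟩
  set I₁ := fiber K x₁
  set I₂ := fiber K x₂
  set J := fiber K (a • x₁ + b • x₂)
  have hb₁ := isBounded_fiber hKb x₁
  have hb₂ := isBounded_fiber hKb x₂
  have hbJ := isBounded_fiber hKb (a • x₁ + b • x₂)
  have hMJ : a • I₁ + b • I₂ ⊆ J := smul_fiber_add_smul_fiber_subset hK ha hb hab x₁ x₂
  have hM : (a • I₁ + b • I₂).Nonempty := (hx₁.smul_set.add hx₂.smul_set)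
  have hJ : J.Nonempty := hM.mono hMJ
  have hsup : sSup (a • I₁ + b • I₂) = a * sSup I₁ + b * sSup I₂ := by
    rw [csSup_add hx₁.smul_set (hb₁.smul₀ a).bddAbove hx₂.smul_set (hb₂.smul₀ b).bddAbove,
      Real.sSup_smul_of_nonneg ha, Real.sSup_smul_of_nonneg hb, smul_eq_mul, smul_eq_mul]
  have hinf : sInf (a • I₁ + b • I₂) = a * sInf I₁ + b * sInf I₂ := by
    rw [csInf_add hx₁.smul_set (hb₁.smul₀ a).bddBelow hx₂.smul_set (hb₂.smul₀ b).bddBelow,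
      Real.sInf_smul_of_nonneg ha, Real.sInf_smul_of_nonneg hb, smul_eq_mul, smul_eq_mul]
  have hsupJ := csSup_le_csSup hbJ.bddAbove hM hMJ
  have hinfJ := csInf_le_csInf hbJ.bddBelow hM hMJ
  simp only [smul_eq_mul]
  rw [toReal_volume_eq_csSup_sub_csInf_of_convex (convex_fiber hK x₁) hx₁ hb₁,
    toReal_volume_eq_csSup_sub_csInf_of_convex (convex_fiber hK x₂) hx₂ hb₂,
    toReal_volume_eq_csSup_sub_csInf_of_convex (convex_fiber hK _) hJ hbJ]
  linarith

theorem fiber_eq_preimage_piFinSuccAbove (K : Set (Fin (d + 1) → ℝ)) (x : Fin d → ℝ) :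
    fiber K x = (fun y => (y, x)) ⁻¹'
      ((MeasurableEquiv.piFinSuccAbove (fun _ : Fin (d + 1) => ℝ) 0).symm ⁻¹' K) := by
  ext y
  simp [fiber, MeasurableEquiv.piFinSuccAbove_symm_apply, Fin.consEquiv]

theorem measurable_volume_fiber (hKm : MeasurableSet K) :
    Measurable fun x => volume (fiber K x) := by
  simpa only [fiber_eq_preimage_piFinSuccAbove] using
    measurable_measure_prodMk_right (μ := (volume : Measure ℝ))
      ((MeasurableEquiv.piFinSuccAbove (fun _ : Fin (d + 1) => ℝ) 0).symm.measurable hKm)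

theorem lintegral_volume_fiber (hKm : MeasurableSet K) :
    ∫⁻ x, volume (fiber K x) = volume K := by
  set e := MeasurableEquiv.piFinSuccAbove (fun _ : Fin (d + 1) => ℝ) 0
  have he := (volume_preserving_piFinSuccAbove (fun _ : Fin (d + 1) => ℝ) 0).symm
  simp only [fiber_eq_preimage_piFinSuccAbove]
  rw [← Measure.prod_apply_symm (e.symm.measurable hKm), ← Measure.volume_eq_prod,
    he.measure_preimage hKm.nullMeasurableSet]

theorem nonempty_fiber_of_toReal_volume_pos {x : Fin d → ℝ}
    (hx : 0 < (volume (fiber K x)).toReal) : (fiber K x).Nonempty :=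
  nonempty_of_measure_ne_zero (μ := volume) fun h => by simp [h] at hx

theorem toReal_volume_fiber_le {c : Fin (d + 1) → ℝ} {R : ℝ} (hR : 0 ≤ R)
    (hKc : K ⊆ closedBall c R) (x : Fin d → ℝ) : (volume (fiber K x)).toReal ≤ 2 * R := by
  refine ENNReal.toReal_le_of_le_ofReal (by positivity) ?_
  simpa [Real.volume_closedBall, two_mul] using
    measure_mono (μ := volume) (fiber_subset_closedBall hKc x)

theorem setOf_lt_toReal_volume_fiber_subset_closedBall {c : Fin (d + 1) → ℝ} {R t : ℝ}
    (hKc : K ⊆ closedBall c R) (ht : 0 ≤ t) :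
    {x | t < (volume (fiber K x)).toReal} ⊆ closedBall (Fin.tail c) R := fun _ hx =>
  mem_closedBall_tail_of_fiber_nonempty hKc (nonempty_fiber_of_toReal_volume_pos (ht.trans_lt hx))

theorem convex_setOf_lt_toReal_volume_fiber (hK : Convex ℝ K) (hKb : IsBounded K) {t : ℝ}
    (ht : 0 ≤ t) : Convex ℝ {x | t < (volume (fiber K x)).toReal} := by
  have h : {x | t < (volume (fiber K x)).toReal} =
      {x ∈ {x | (fiber K x).Nonempty} | t < (volume (fiber K x)).toReal} :=
    Set.ext fun x => ⟨fun hx => ⟨nonempty_fiber_of_toReal_volume_pos (ht.trans_lt hx), hx⟩,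
      And.right⟩
  rw [h]
  exact (concaveOn_toReal_volume_fiber hK hKb).convex_gt t

theorem volume_eq_lintegral_volume_setOf_lt_toReal_volume_fiber (hKm : MeasurableSet K)
    (hKb : IsBounded K) :
    volume K = ∫⁻ t in Set.Ioi 0, volume {x | t < (volume (fiber K x)).toReal} := by
  rw [← lintegral_volume_fiber hKm, ← lintegral_eq_lintegral_meas_lt _
    (ae_of_all _ fun _ => ENNReal.toReal_nonneg)
    (measurable_volume_fiber hKm).ennreal_toReal.aemeasurable]
  exact lintegral_congr fun x =>
    (ENNReal.ofReal_toReal (isBounded_fiber hKb x).measure_lt_top.ne).symm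

theorem cons_mem_latticePoints_iff {y : ℤ} {n : Fin d → ℤ} :
    (Fin.cons y n : Fin (d + 1) → ℤ) ∈ latticePoints K ↔
      (y : ℝ) ∈ fiber K (fun j => (n j : ℝ)) := by
  change Int.cast ∘ (Fin.cons y n : Fin (d + 1) → ℤ) ∈ K ↔ _
  rw [Fin.comp_cons]
  rfl

theorem ncard_latticePoints_eq_sum_ncard_fiber {c : Fin (d + 1) → ℝ} {R : ℝ} (hR : 0 ≤ R)
    (hKc : K ⊆ closedBall c R) :
    (latticePoints K).ncard =
      ∑ n ∈ latticeBox (Fin.tail c) R, (((↑) : ℤ → ℝ) ⁻¹' fiber K (fun j => (n j : ℝ))).ncard := by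
  set T := (latticeBox c R).filter fun n => (fun j => (n j : ℝ)) ∈ K
  have hT : ∀ n, n ∈ T ↔ n ∈ latticePoints K := fun n => by
    rw [← Finset.mem_coe, coe_filter_latticeBox hR hKc]
  have hfib : ∀ n ∈ T, ((n 0 : ℤ) : ℝ) ∈ fiber K fun j => (Fin.tail n j : ℝ) := fun n hn =>
    cons_mem_latticePoints_iff.1 ((Fin.cons_self_tail n).symm ▸ (hT n).1 hn)
  have hmaps : (T : Set (Fin (d + 1) → ℤ)).MapsTo Fin.tail (latticeBox (Fin.tail c) R) :=
    fun n hn => latticePoints_subset_latticeBox hR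
      (fun x hx => mem_closedBall_tail_of_fiber_nonempty hKc hx) ⟨_, hfib n hn⟩
  rw [show latticePoints K = (T : Set _) from (Set.ext hT).symm, Set.ncard_coe_finset,
    Finset.card_eq_sum_card_fiberwise hmaps]
  refine Finset.sum_congr rfl fun n' _ => ?_
  rw [← Set.ncard_coe_finset,
    ← Set.ncard_image_of_injective _ (Fin.cons_left_injective (α := fun _ => ℤ) n')]
  congr 1
  ext n
  simp only [Finset.coe_filter, Set.mem_ofPred_eq, Set.mem_image, Set.mem_preimage]
  constructor
  · rintro ⟨hn, rfl⟩
    exact ⟨n 0, hfib n hn, Fin.cons_self_tail n⟩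
  · rintro ⟨y, hy, rfl⟩
    exact ⟨(hT _).2 (cons_mem_latticePoints_iff.2 hy), Fin.tail_cons _ _⟩

end Fiber

theorem abs_sum_volume_fiber_sub_volume_le {d : ℕ} {c : Fin (d + 1) → ℝ} {R E : ℝ} (hR : 0 ≤ R)
    (hE : ∀ L : Set (Fin d → ℝ), Convex ℝ L → L ⊆ closedBall (Fin.tail c) R →
      |((latticePoints L).ncard : ℝ) - (volume L).toReal| ≤ E)
    {K : Set (Fin (d + 1) → ℝ)} (hK : Convex ℝ K) (hKm : MeasurableSet K)
    (hKc : K ⊆ closedBall c R) :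
    |∑ n ∈ latticeBox (Fin.tail c) R, (volume (fiber K fun j => (n j : ℝ))).toReal -
      (volume K).toReal| ≤ 2 * R * E := by
  set f : (Fin d → ℝ) → ℝ := fun x => (volume (fiber K x)).toReal
  have hKb : IsBounded K := isBounded_closedBall.subset hKc
  have hf0 : 0 ≤ f := fun _ => ENNReal.toReal_nonneg
  have hempty : ∀ t, 2 * R < t → {x | t < f x} = ∅ := fun t ht =>
    Set.eq_empty_of_forall_notMem fun x hx =>
      (toReal_volume_fiber_le hR hKc x).not_gt (ht.trans hx)
  have hsum : ∑' n : Fin d → ℤ, ENNReal.ofReal (f fun j => (n j : ℝ)) =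
      ∑ n ∈ latticeBox (Fin.tail c) R, ENNReal.ofReal (f fun j => (n j : ℝ)) := by
    refine tsum_eq_sum fun n hn => ENNReal.ofReal_eq_zero.2 (not_lt.1 fun h => hn ?_)
    exact latticePoints_subset_latticeBox hR
      (setOf_lt_toReal_volume_fiber_subset_closedBall hKc le_rfl) h
  have hcount : ∑' n : Fin d → ℤ, ENNReal.ofReal (f fun j => (n j : ℝ)) =
      ∫⁻ t in Set.Ioi 0, ((latticePoints {x | t < f x}).encard : ℝ≥0∞) :=
    tsum_ofReal_eq_lintegral_encard _ fun _ => hf0 _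
  rw [hsum] at hcount
  rw [← ENNReal.toReal_ofReal (Finset.sum_nonneg fun _ _ => hf0 _),
    ENNReal.ofReal_sum_of_nonneg fun _ _ => hf0 _, hcount,
    volume_eq_lintegral_volume_setOf_lt_toReal_volume_fiber hKm hKb]
  refine abs_toReal_setLIntegral_Ioi_sub_le (by positivity) ?_ (fun t ht => ?_) (fun t ht => ?_)
    (fun t ht => ?_)
  · simpa [latticePoints] using hE ∅ convex_empty (Set.empty_subset _)
  · simp [hempty t ht, latticePoints]
  · exact (congrArg volume (hempty t ht)).trans measure_empty
  · have hball := setOf_lt_toReal_volume_fiber_subset_closedBall hKc ht.1.le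
    have hfin : (latticePoints {x | t < f x}).Finite :=
      (latticeBox _ R).finite_toSet.subset (latticePoints_subset_latticeBox hR hball)
    refine ⟨by simpa using hfin, (isBounded_closedBall.subset hball).measure_lt_top.ne, ?_⟩
    rw [← hfin.cast_ncard_eq]
    simpa using hE _ (convex_setOf_lt_toReal_volume_fiber hK hKb ht.1.le) hball

theorem abs_ncard_latticePoints_sub_volume_le_succ {d : ℕ} {c : Fin (d + 1) → ℝ} {R E : ℝ}
    (hR : 1 ≤ R)
    (hE : ∀ L : Set (Fin d → ℝ), Convex ℝ L → L ⊆ closedBall (Fin.tail c) R →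
      |((latticePoints L).ncard : ℝ) - (volume L).toReal| ≤ E)
    {K : Set (Fin (d + 1) → ℝ)} (hK : Convex ℝ K) (hKm : MeasurableSet K)
    (hKc : K ⊆ closedBall c R) :
    |((latticePoints K).ncard : ℝ) - (volume K).toReal| ≤ (3 * R) ^ d + 2 * R * E := by
  have hR0 : 0 ≤ R := zero_le_one.trans hR
  have hfibers : |((latticePoints K).ncard : ℝ) -
      ∑ n ∈ latticeBox (Fin.tail c) R, (volume (fiber K fun j => (n j : ℝ))).toReal| ≤
        (3 * R) ^ d := by
    rw [ncard_latticePoints_eq_sum_ncard_fiber hR0 hKc, Nat.cast_sum, ← Finset.sum_sub_distrib]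
    calc _ ≤ ∑ n ∈ latticeBox (Fin.tail c) R, (1 : ℝ) :=
          (Finset.abs_sum_le_sum_abs _ _).trans (Finset.sum_le_sum fun n _ =>
            abs_ncard_int_sub_volume_le_one (convex_fiber hK _)
              (isBounded_closedBall.subset (fiber_subset_closedBall hKc _)))
      _ ≤ (3 * R) ^ d := by simpa using card_latticeBox_le hR
  calc _ ≤ _ := abs_sub_le _ _ _
    _ ≤ (3 * R) ^ d + 2 * R * E :=
      add_le_add hfibers (abs_sum_volume_fiber_sub_volume_le hR0 hE hK hKm hKc)

-- An integer exponent, so that the induction starts at `d = 0`, where the count is exact.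
theorem exists_abs_ncard_latticePoints_sub_volume_le (d : ℕ) :
    ∃ C : ℝ, 0 ≤ C ∧ ∀ R : ℝ, 1 ≤ R → ∀ (c : Fin d → ℝ) (K : Set (Fin d → ℝ)), Convex ℝ K →
      K ⊆ closedBall c R →
        |((latticePoints K).ncard : ℝ) - (volume K).toReal| ≤ C * R ^ ((d : ℤ) - 1) := by
  induction d with
  | zero =>
    exact ⟨0, le_rfl, fun R _ c K _ _ => by simp [ncard_latticePoints_eq_volume_of_isEmpty]⟩
  | succ d ih =>
    obtain ⟨C, hC, hcount⟩ := ih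
    refine ⟨3 ^ d + 2 * C, by positivity, fun R hR c K hK hKc => ?_⟩
    have hR0 : 0 < R := zero_lt_one.trans_le hR
    refine abs_ncard_latticePoints_sub_volume_le_of_measurableSet hR0.le
      (fun K hK hKm hKc => ?_) hK hKc
    calc _ ≤ (3 * R) ^ d + 2 * R * (C * R ^ ((d : ℤ) - 1)) :=
          abs_ncard_latticePoints_sub_volume_le_succ hR
            (fun L hL hLc => hcount R hR _ L hL hLc) hK hKm hKc
      _ = (3 ^ d + 2 * C) * R ^ (((d + 1 : ℕ) : ℤ) - 1) := by
        rw [zpow_sub_one₀ hR0.ne']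
        push_cast
        rw [add_sub_cancel_right, zpow_natCast]
        field_simp
        ring

def residue {d : ℕ} (m : ℕ) (n : Fin d → ℤ) : Fin d → ℕ := fun j => (n j % m).toNat

def rescale {d : ℕ} (K : Set (Fin d → ℝ)) (m : ℕ) (r : Fin d → ℕ) : Set (Fin d → ℝ) :=
  (fun x => (m : ℝ) • x + fun j => (r j : ℝ)) ⁻¹' K

section Rescale

variable {d : ℕ} {K : Set (Fin d → ℝ)} {m : ℕ} {r : Fin d → ℕ}

theorem convex_rescale (hK : Convex ℝ K) : Convex ℝ (rescale K m r) :=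
  (hK.translate_preimage_left _).smul_preimage _

theorem toReal_volume_rescale (hm : 0 < m) :
    (volume (rescale K m r)).toReal = (volume K).toReal / (m : ℝ) ^ d := by
  have hm' : (m : ℝ) ≠ 0 := by positivity
  rw [show rescale K m r = ((m : ℝ) • ·) ⁻¹' ((· + fun j => (r j : ℝ)) ⁻¹' K) from rfl,
    Measure.addHaar_preimage_smul volume hm', measure_preimage_add_right, Module.finrank_fin_fun,
    ENNReal.toReal_mul, ENNReal.toReal_ofReal (by positivity), abs_inv, abs_pow, Nat.abs_cast,
    div_eq_inv_mul]

theorem rescale_subset_closedBall {x₀ : Fin d → ℝ} {B : ℝ} (hm : 0 < m)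
    (hKc : K ⊆ closedBall x₀ B) :
    rescale K m r ⊆ closedBall ((m : ℝ)⁻¹ • (x₀ - fun j => (r j : ℝ))) (B / m) := fun x hx => by
  have hm' : (0 : ℝ) < m := by exact_mod_cast hm
  have h := hKc hx
  rw [mem_closedBall, dist_eq_norm] at h ⊢
  have : x - (m : ℝ)⁻¹ • (x₀ - fun j => (r j : ℝ)) =
      (m : ℝ)⁻¹ • ((m : ℝ) • x + (fun j => (r j : ℝ)) - x₀) := by
    funext j
    simp only [Pi.sub_apply, Pi.smul_apply, Pi.add_apply, smul_eq_mul]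
    field_simp
    ring
  rw [this, norm_smul, Real.norm_eq_abs, abs_inv, Nat.abs_cast, inv_mul_eq_div]
  exact div_le_div_of_nonneg_right h hm'.le

theorem ncard_latticePoints_rescale (hm : 0 < m) (hr : ∀ j, r j < m) :
    (latticePoints (rescale K m r)).ncard = {n ∈ latticePoints K | residue m n = r}.ncard := by
  have hm' : (m : ℤ) ≠ 0 := by positivity
  set g : (Fin d → ℤ) → (Fin d → ℤ) := fun n j => m * n j + r j
  have hg : Function.Injective g := fun n n' h => funext fun j => by
    simpa [g, hm.ne'] using congrFun h j
  have hgK : ∀ n, g n ∈ latticePoints K ↔ n ∈ latticePoints (rescale K m r) := fun n => by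
    change (fun j => ((m * n j + r j : ℤ) : ℝ)) ∈ K ↔ _
    push_cast
    rfl
  rw [← Set.ncard_image_of_injective _ hg]
  congr 1
  ext n
  simp only [Set.mem_image, Set.mem_ofPred_eq]
  constructor
  · rintro ⟨n', hn', rfl⟩
    refine ⟨(hgK n').2 hn', funext fun j => ?_⟩
    simp [residue, g, Int.emod_eq_of_lt, hr j]
  · rintro ⟨hn, rfl⟩
    have hgn : g (fun j => n j / m) = n := funext fun j => by
      simp [g, residue, Int.toNat_of_nonneg (Int.emod_nonneg _ hm'), Int.mul_ediv_add_emod]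
    refine ⟨_, (hgK _).1 ?_, hgn⟩
    rwa [hgn]

end Rescale

section LocalDensity

variable {d t : ℕ} (A : Fin t → Fin d → ℤ) (b : Fin t → ℤ) (D : Fin t → ℕ)

def localSolutions : Finset (Fin d → ℕ) :=
  (Fintype.piFinset fun _ : Fin d => Finset.range ((univ : Finset (Fin t)).lcm D)).filter
    fun n => ∀ i, (D i : ℤ) ∣ psiZ A b i fun j => (n j : ℤ)

theorem alphaD_eq_card_localSolutions_div :
    alphaD A b D = #(localSolutions A b D) / (((univ : Finset (Fin t)).lcm D : ℕ) : ℝ) ^ d :=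
  rfl

theorem card_localSolutions_le : #(localSolutions A b D) ≤ ((univ : Finset (Fin t)).lcm D) ^ d :=
  (Finset.card_filter_le _ _).trans (by simp)

theorem lt_of_mem_localSolutions {r : Fin d → ℕ} (hr : r ∈ localSolutions A b D) (j : Fin d) :
    r j < (univ : Finset (Fin t)).lcm D := by
  simp only [localSolutions, Finset.mem_filter, Fintype.mem_piFinset, Finset.mem_range] at hr
  exact hr.1 j

theorem psiZ_modEq {m : ℤ} {n u : Fin d → ℤ} (h : ∀ j, n j ≡ u j [ZMOD m]) (i : Fin t) :
    psiZ A b i n ≡ psiZ A b i u [ZMOD m] :=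
  (Int.ModEq.sum fun j _ => (h j).mul_left _).add_right _

variable {D}

theorem lcm_pos (hD : ∀ i, 0 < D i) : 0 < (univ : Finset (Fin t)).lcm D :=
  Nat.pos_of_ne_zero fun h => by
    obtain ⟨i, -, hi⟩ := Finset.lcm_eq_zero_iff.1 h
    exact (hD i).ne' hi

theorem residue_mem_localSolutions_iff (hD : ∀ i, 0 < D i) (n : Fin d → ℤ) :
    residue ((univ : Finset (Fin t)).lcm D) n ∈ localSolutions A b D ↔
      ∀ i, (D i : ℤ) ∣ psiZ A b i n := by
  set m := (univ : Finset (Fin t)).lcm D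
  have hm : (0 : ℤ) < m := by exact_mod_cast lcm_pos hD
  have hres : ∀ j, ((residue m n j : ℕ) : ℤ) = n j % m := fun j =>
    Int.toNat_of_nonneg (Int.emod_nonneg _ hm.ne')
  simp only [localSolutions, Finset.mem_filter, Fintype.mem_piFinset, Finset.mem_range]
  refine (and_iff_right fun j => ?_).trans (forall_congr' fun i => ?_)
  · have h : ((residue m n j : ℕ) : ℤ) < m := hres j ▸ Int.emod_lt_of_pos (n j) hm
    exact_mod_cast h
  · refine ((psiZ_modEq A b (m := m) (fun j => ?_) i).of_dvd ?_).dvd_iff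
    · rw [hres]
      exact Int.mod_modEq _ _
    · exact_mod_cast Finset.dvd_lcm (Finset.mem_univ i)

theorem sum_prod_ite_dvd_eq_sum_ncard_latticePoints_rescale (hD : ∀ i, 0 < D i)
    {K : Set (Fin d → ℝ)} {F : Finset (Fin d → ℤ)} (hF : (F : Set (Fin d → ℤ)) = latticePoints K) :
    ∑ n ∈ F, ∏ i, (if (D i : ℤ) ∣ psiZ A b i n then (1 : ℝ) else 0) =
      ∑ r ∈ localSolutions A b D,
        ((latticePoints (rescale K ((univ : Finset (Fin t)).lcm D) r)).ncard : ℝ) := by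
  simp_rw [Fintype.prod_boole, ← residue_mem_localSolutions_iff A b hD]
  rw [Finset.sum_boole, ← Finset.sum_card_fiberwise_eq_card_filter, Nat.cast_sum]
  refine Finset.sum_congr rfl fun r hr => ?_
  rw [ncard_latticePoints_rescale (lcm_pos hD) (lt_of_mem_localSolutions A b D hr), ← hF,
    ← Set.ncard_coe_finset, Finset.coe_filter]
  rfl

theorem toReal_volume_mul_alphaD (hD : ∀ i, 0 < D i) (K : Set (Fin d → ℝ)) :
    (volume K).toReal * alphaD A b D =
      ∑ r ∈ localSolutions A b D,
        (volume (rescale K ((univ : Finset (Fin t)).lcm D) r)).toReal := by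
  simp_rw [toReal_volume_rescale (lcm_pos hD), Finset.sum_const, nsmul_eq_mul,
    alphaD_eq_card_localSolutions_div]
  ring

end LocalDensity

theorem ptsBox_eq_filter_latticeBox {d : ℕ} (x₀ : Fin d → ℝ) (B : ℕ) (K : Set (Fin d → ℝ)) :
    ptsBox (fun j => ⌈x₀ j⌉ - (B : ℤ)) (fun j => ⌊x₀ j⌋ + (B : ℤ)) K =
      (latticeBox x₀ B).filter fun n => (fun j => (n j : ℝ)) ∈ K := by
  simp [ptsBox, latticeBox, Int.ceil_sub_natCast, Int.floor_add_natCast]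

theorem abs_sum_prod_ite_sub_volume_mul_alphaD_le_of_lcm_le {d t : ℕ} {C : ℝ} (hC : 0 ≤ C)
    (hcount : ∀ R : ℝ, 1 ≤ R → ∀ (c : Fin d → ℝ) (L : Set (Fin d → ℝ)), Convex ℝ L →
      L ⊆ closedBall c R →
        |((latticePoints L).ncard : ℝ) - (volume L).toReal| ≤ C * R ^ ((d : ℤ) - 1))
    (A : Fin t → Fin d → ℤ) (b : Fin t → ℤ) {D : Fin t → ℕ} (hD : ∀ i, 0 < D i)
    {K : Set (Fin d → ℝ)} (hK : Convex ℝ K) {x₀ : Fin d → ℝ} {B : ℝ} (hKc : K ⊆ closedBall x₀ B)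
    (hmB : (((univ : Finset (Fin t)).lcm D : ℕ) : ℝ) ≤ B) :
    |∑ n ∈ (latticeBox x₀ B).filter (fun n => (fun j => (n j : ℝ)) ∈ K),
        ∏ i, (if (D i : ℤ) ∣ psiZ A b i n then (1 : ℝ) else 0) -
      (volume K).toReal * alphaD A b D| ≤
        C * B ^ ((d : ℤ) - 1) * (((univ : Finset (Fin t)).lcm D : ℕ) : ℝ) := by
  set m := (univ : Finset (Fin t)).lcm D
  have hm : (0 : ℝ) < m := by exact_mod_cast lcm_pos hD
  have hR : 1 ≤ B / m := (one_le_div hm).2 hmB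
  rw [sum_prod_ite_dvd_eq_sum_ncard_latticePoints_rescale A b hD
    (coe_filter_latticeBox (hm.le.trans hmB) hKc), toReal_volume_mul_alphaD A b hD,
    ← Finset.sum_sub_distrib]
  calc _ ≤ ∑ r ∈ localSolutions A b D, C * (B / m) ^ ((d : ℤ) - 1) :=
        (Finset.abs_sum_le_sum_abs _ _).trans (Finset.sum_le_sum fun r _ =>
          hcount _ hR _ _ (convex_rescale hK) (rescale_subset_closedBall (lcm_pos hD) hKc))
    _ ≤ (m : ℝ) ^ d * (C * (B / m) ^ ((d : ℤ) - 1)) := by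
        rw [Finset.sum_const, nsmul_eq_mul]
        gcongr
        exact_mod_cast card_localSolutions_le A b D
    _ = C * B ^ ((d : ℤ) - 1) * m := by
        rw [div_zpow, ← zpow_natCast, zpow_sub_one₀ hm.ne']
        field_simp

theorem abs_sum_prod_ite_sub_volume_mul_alphaD_le {d t : ℕ} (A : Fin t → Fin d → ℤ)
    (b : Fin t → ℤ) {D : Fin t → ℕ} (hD : ∀ i, 0 < D i) {x₀ : Fin d → ℝ} {B : ℝ} (hB : 1 ≤ B)
    {K : Set (Fin d → ℝ)} (hKc : K ⊆ closedBall x₀ B) :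
    |∑ n ∈ (latticeBox x₀ B).filter (fun n => (fun j => (n j : ℝ)) ∈ K),
        ∏ i, (if (D i : ℤ) ∣ psiZ A b i n then (1 : ℝ) else 0) -
      (volume K).toReal * alphaD A b D| ≤ (3 ^ d + 2 ^ d) * B ^ d := by
  have hsum0 : 0 ≤ ∑ n ∈ (latticeBox x₀ B).filter (fun n => (fun j => (n j : ℝ)) ∈ K),
      ∏ i, (if (D i : ℤ) ∣ psiZ A b i n then (1 : ℝ) else 0) :=
    Finset.sum_nonneg fun _ _ => Finset.prod_nonneg fun _ _ => by positivity
  have hsum : ∑ n ∈ (latticeBox x₀ B).filter (fun n => (fun j => (n j : ℝ)) ∈ K),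
      ∏ i, (if (D i : ℤ) ∣ psiZ A b i n then (1 : ℝ) else 0) ≤ 3 ^ d * B ^ d := by
    calc _ ≤ ∑ n ∈ (latticeBox x₀ B).filter (fun n => (fun j => (n j : ℝ)) ∈ K), (1 : ℝ) :=
          Finset.sum_le_sum fun n _ => Finset.prod_le_one (fun i _ => by positivity)
            fun i _ => by split_ifs <;> norm_num
      _ ≤ 3 ^ d * B ^ d := by
        rw [Finset.sum_const, nsmul_one, ← mul_pow]
        exact le_trans (by exact_mod_cast Finset.card_filter_le _ _) (card_latticeBox_le hB)
  have hvol : (volume K).toReal ≤ 2 ^ d * B ^ d := by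
    refine ENNReal.toReal_le_of_le_ofReal (by positivity) ?_
    calc volume K ≤ volume (closedBall x₀ B) := measure_mono hKc
      _ = ENNReal.ofReal (2 ^ d * B ^ d) := by
        rw [Real.volume_pi_closedBall _ (by positivity), Fintype.card_fin,
          ← mul_pow, ENNReal.ofReal_pow (by positivity)]
  have halpha : alphaD A b D ≤ 1 := by
    rw [alphaD_eq_card_localSolutions_div, div_le_one (by exact_mod_cast pow_pos (lcm_pos hD) d)]
    exact_mod_cast card_localSolutions_le A b D
  have hprod0 : 0 ≤ (volume K).toReal * alphaD A b D := by
    rw [alphaD_eq_card_localSolutions_div]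
    positivity
  have hprod := (mul_le_of_le_one_right ENNReal.toReal_nonneg halpha).trans hvol
  rw [abs_sub_le_iff, add_mul]
  constructor <;> linarith

theorem volume_packing_general (d t : ℕ) :
    ∃ C : ℝ, 0 < C ∧
      ∀ B : ℕ, 0 < B →
      ∀ (x₀ : Fin d → ℝ) (K : Set (Fin d → ℝ)), Convex ℝ K →
        (∀ x ∈ K, ∀ j, x j ∈ Set.Icc (x₀ j - (B : ℝ)) (x₀ j + (B : ℝ))) →
      ∀ (A : Fin t → Fin d → ℤ) (b : Fin t → ℤ), IsSystem A b →
      ∀ D : Fin t → ℕ, (∀ i, 0 < D i) →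
        |(∑ n ∈ ptsBox (fun j => ⌈x₀ j⌉ - (B : ℤ)) (fun j => ⌊x₀ j⌋ + (B : ℤ)) K,
              ∏ i, if (D i : ℤ) ∣ psiZ A b i n then (1 : ℝ) else 0) -
            (volume K).toReal * alphaD A b D| ≤
          C * (B : ℝ) ^ (d - 1) * (((univ : Finset (Fin t)).lcm D : ℕ) : ℝ) := by
  obtain ⟨C, hC, hcount⟩ := exists_abs_ncard_latticePoints_sub_volume_le d
  have h3 : (0 : ℝ) < 3 ^ d := by positivity
  have h2 : (0 : ℝ) < 2 ^ d := by positivity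
  refine ⟨C + 3 ^ d + 2 ^ d, by positivity, fun B hB x₀ K hK hKx A b _ D hD => ?_⟩
  have hB1 : (1 : ℝ) ≤ B := by exact_mod_cast hB
  have hKc : K ⊆ closedBall x₀ B := fun x hx => by
    rw [closedBall_pi _ (by positivity)]
    exact fun j _ => by simpa [Real.closedBall_eq_Icc] using hKx x hx j
  rw [ptsBox_eq_filter_latticeBox]
  rcases le_or_gt (((univ : Finset (Fin t)).lcm D : ℕ) : ℝ) B with hmB | hBm
  · calc _ ≤ C * (B : ℝ) ^ ((d : ℤ) - 1) * ((univ : Finset (Fin t)).lcm D : ℕ) :=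
          abs_sum_prod_ite_sub_volume_mul_alphaD_le_of_lcm_le hC hcount A b hD hK hKc hmB
      _ ≤ _ := by
          gcongr
          · linarith
          · exact zpow_sub_one_le_pow_sub_one hB1 d
  · calc _ ≤ (3 ^ d + 2 ^ d) * (B : ℝ) ^ d :=
          abs_sum_prod_ite_sub_volume_mul_alphaD_le A b hD hB1 hKc
      _ ≤ _ := by
          rw [mul_assoc]
          gcongr
          · linarith
          · exact pow_le_pow_sub_one_mul hB1 hBm.le d

/-- **Volume packing lemma.** For a convex body `K` contained in a translate of
`[-B,B]^d`, `Σ_{n ∈ ℤ^d ∩ K} ∏_i 1_{d_i ∣ ψ_i(n)} = vol(K) α(d_1,…,d_t) +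
O_d(B^{d-1} lcm(d_1,…,d_t))`. -/
theorem volume_packing (d t : ℕ) (hd : 0 < d) (ht : 0 < t) :
    ∃ C : ℝ, 0 < C ∧
      ∀ B : ℕ, 0 < B →
      ∀ (x₀ : Fin d → ℝ) (K : Set (Fin d → ℝ)), Convex ℝ K →
        (∀ x ∈ K, ∀ j, x j ∈ Set.Icc (x₀ j - (B : ℝ)) (x₀ j + (B : ℝ))) →
      ∀ (A : Fin t → Fin d → ℤ) (b : Fin t → ℤ), IsSystem A b →
      ∀ D : Fin t → ℕ, (∀ i, 0 < D i) →
        |(∑ n ∈ ptsBox (fun j => ⌈x₀ j⌉ - (B : ℤ)) (fun j => ⌊x₀ j⌋ + (B : ℤ)) K,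
              ∏ i, if (D i : ℤ) ∣ psiZ A b i n then (1 : ℝ) else 0) -
            (volume K).toReal * alphaD A b D| ≤
          C * (B : ℝ) ^ (d - 1) * (((univ : Finset (Fin t)).lcm D : ℕ) : ℝ) :=
  volume_packing_general d t

end DivisorCorr
end
end

section
/- Bounds on local divisor densities at prime powers. Let Ψ = (ψ_1, …, ψ_t) : ℤ^d → ℤ^t be a system of affine-linear forms, let p be a prime, and let a_1, …, a_t be non-negative integers. (a) If i ≠ j, a_i ≥ 1, a_j ≥ 1, and ψ_i and ψ_j are not affinely related modulo p, then α(p^{a_1}, …, p^{a_t}) ≤ p^{−a_i − a_j}. (b) Consequently, if p is not exceptional for Ψ and at least two of the exponents a_1, …, a_t are nonzero, then α(p^{a_1}, …, p^{a_t}) ≤ p^{−(max_k a_k) − 1}. -/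
open MeasureTheory Finset Filter
open scoped Classical BigOperators

noncomputable section

theorem AddMonoidHom.card_fiber_mul_card {G H : Type*} [AddGroup G] [AddGroup H] [Fintype G]
    [Fintype H] [DecidableEq H] (f : G →+ H) (hf : Function.Surjective f) (c : H) :
    #{g | f g = c} * Fintype.card H = Fintype.card G := by
  calc #{g | f g = c} * Fintype.card H = ∑ y : H, #{g | f g = y} := by
        rw [sum_congr rfl fun y _ => AddMonoidHom.card_fiber_eq_of_mem_range f (hf y) (hf c),
          sum_const, card_univ, smul_eq_mul, mul_comm]
    _ = Fintype.card G := (card_eq_sum_card_fiberwise fun _ _ => mem_univ _).symm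

-- Cramer's rule in the columns `k, l`.
theorem surjective_dotProduct_pair_of_isUnit {R ι : Type*} [CommRing R] [Fintype ι]
    [DecidableEq ι] {u v : ι → R} {k l : ι} (h : IsUnit (u k * v l - u l * v k)) :
    Function.Surjective fun g : ι → R => (u ⬝ᵥ g, v ⬝ᵥ g) := by
  obtain ⟨δ, hδ⟩ := h
  rintro ⟨x, y⟩
  refine ⟨Pi.single k (↑δ⁻¹ * (v l * x - u l * y)) + Pi.single l (↑δ⁻¹ * (u k * y - v k * x)), ?_⟩
  simp only [dotProduct_add, dotProduct_single, Prod.mk.injEq]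
  constructor
  · linear_combination x * δ.inv_mul - ↑δ⁻¹ * x * hδ
  · linear_combination y * δ.inv_mul - ↑δ⁻¹ * y * hδ

namespace DivisorCorr

theorem affRelMod_of_forall_dvd_minor {d p : ℕ} (hp : p ≠ 1) {u v : Fin d → ℤ}
    (h : ∀ k l, (p : ℤ) ∣ u k * v l - u l * v k) : AffRelMod p u v := by
  by_cases hu : ∀ k, (p : ℤ) ∣ u k
  · refine ⟨1, 0, Or.inl ?_, fun k => by simpa using hu k⟩
    exact_mod_cast mt Nat.dvd_one.mp hp
  · push Not at hu
    obtain ⟨k₀, hk₀⟩ := hu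
    refine ⟨v k₀, -u k₀, Or.inr (by rwa [dvd_neg]), fun k => ?_⟩
    have hminor : v k₀ * u k + -u k₀ * v k = u k * v k₀ - u k₀ * v k := by ring
    exact hminor ▸ h k k₀

theorem castHom_intCast_dotProduct {d m D : ℕ} (h : D ∣ m) (w n : Fin d → ℤ) :
    ZMod.castHom h (ZMod D) ((fun c => (w c : ZMod m)) ⬝ᵥ fun c => (n c : ZMod m)) =
      ((w ⬝ᵥ n : ℤ) : ZMod D) := by
  rw [← map_intCast (ZMod.castHom h (ZMod D)) (w ⬝ᵥ n)]
  exact congrArg _ ((Int.castRingHom (ZMod m)).map_dotProduct w n).symm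

theorem intCast_dotProduct_eq_neg_of_dvd_psiZ {d t : ℕ} {A : Fin t → Fin d → ℤ}
    {b : Fin t → ℤ} {D : ℕ} {r : Fin t} {n : Fin d → ℤ} (h : (D : ℤ) ∣ psiZ A b r n) :
    ((A r ⬝ᵥ n : ℤ) : ZMod D) = -b r := by
  have hzero := (ZMod.intCast_zmod_eq_zero_iff_dvd _ D).mpr h
  rw [psiZ, Int.cast_add] at hzero
  exact eq_neg_of_add_eq_zero_left hzero

theorem card_filter_dvd_psiZ_mul_le {d t m : ℕ} [NeZero m] (A : Fin t → Fin d → ℤ)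
    (b : Fin t → ℤ) (D : Fin t → ℕ) {i j : Fin t} (hi : D i ∣ m) (hj : D j ∣ m) {k l : Fin d}
    (hminor : IsCoprime (A i k * A j l - A i l * A j k) (m : ℤ)) :
    #{n ∈ Fintype.piFinset fun _ : Fin d => range m |
        ∀ r, (D r : ℤ) ∣ psiZ A b r fun c => (n c : ℤ)} * (D i * D j) ≤ m ^ d := by
  have : NeZero (D i) := ⟨fun h => NeZero.ne m (Nat.eq_zero_of_zero_dvd (h ▸ hi))⟩
  have : NeZero (D j) := ⟨fun h => NeZero.ne m (Nat.eq_zero_of_zero_dvd (h ▸ hj))⟩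
  let f : (Fin d → ZMod m) →+ ZMod (D i) × ZMod (D j) :=
    AddMonoidHom.mk' (fun g => (ZMod.castHom hi _ ((fun c => (A i c : ZMod m)) ⬝ᵥ g),
      ZMod.castHom hj _ ((fun c => (A j c : ZMod m)) ⬝ᵥ g))) fun g g' => by
        simp only [dotProduct_add, map_add, Prod.mk_add_mk]
  have hf : Function.Surjective f :=
    ((ZMod.castHom_surjective hi).prodMap (ZMod.castHom_surjective hj)).comp
      (surjective_dotProduct_pair_of_isUnit (k := k) (l := l) (by
        exact_mod_cast (ZMod.coe_int_isUnit_iff_isCoprime _ m).mpr hminor.symm))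
  set S := {n ∈ Fintype.piFinset fun _ : Fin d => range m |
    ∀ r, (D r : ℤ) ∣ psiZ A b r fun c => (n c : ℤ)}
  let c₀ : ZMod (D i) × ZMod (D j) := (-b i, -b j)
  have hmaps : ∀ n ∈ S, (fun c => ((n c : ℤ) : ZMod m)) ∈ ({g | f g = c₀} : Finset _) := by
    intro n hn
    simp only [S, mem_filter] at hn
    simp only [mem_filter, mem_univ, true_and, f, c₀, AddMonoidHom.mk'_apply,
      castHom_intCast_dotProduct, Prod.mk.injEq]
    exact ⟨intCast_dotProduct_eq_neg_of_dvd_psiZ (hn.2 i),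
      intCast_dotProduct_eq_neg_of_dvd_psiZ (hn.2 j)⟩
  have hinj : Set.InjOn (fun (n : Fin d → ℕ) c => ((n c : ℤ) : ZMod m)) S := by
    intro n hn n' hn' h
    simp only [S, coe_filter, Fintype.mem_piFinset, mem_range] at hn hn'
    funext c
    have := congrArg ZMod.val (congrFun h c)
    simpa [ZMod.val_natCast_of_lt (hn.1 c), ZMod.val_natCast_of_lt (hn'.1 c)] using this
  calc #S * (D i * D j) ≤ #{g | f g = c₀} * Fintype.card (ZMod (D i) × ZMod (D j)) := by
        rw [Fintype.card_prod, ZMod.card, ZMod.card]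
        exact Nat.mul_le_mul_right _ (card_le_card_of_injOn _ hmaps hinj)
    _ = m ^ d := by rw [f.card_fiber_mul_card hf, Fintype.card_fun, ZMod.card, Fintype.card_fin]

theorem alphaD_le_inv_mul_of_isCoprime {d t : ℕ} (A : Fin t → Fin d → ℤ) (b : Fin t → ℤ)
    (D : Fin t → ℕ) (hD : ∀ r, D r ≠ 0) {i j : Fin t} {k l : Fin d}
    (hminor : IsCoprime (A i k * A j l - A i l * A j k) ((univ.lcm D : ℕ) : ℤ)) :
    alphaD A b D ≤ ((D i : ℝ) * D j)⁻¹ := by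
  have : NeZero (univ.lcm D) := ⟨lcm_ne_zero_iff.mpr fun r _ => hD r⟩
  have hcount := card_filter_dvd_psiZ_mul_le A b D (dvd_lcm (mem_univ i)) (dvd_lcm (mem_univ j))
    hminor
  have hDij : (0 : ℝ) < D i * D j := by
    have := hD i; have := hD j; positivity
  have hm : (0 : ℝ) < ((univ.lcm D : ℕ) : ℝ) ^ d := by
    have := NeZero.ne (univ.lcm D); positivity
  rw [alphaD, div_le_iff₀ hm, inv_mul_eq_div, le_div_iff₀ hDij]
  exact_mod_cast hcount

theorem alphaD_pow_le_of_not_affRelMod {d t p : ℕ} (hp : p.Prime) (A : Fin t → Fin d → ℤ)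
    (b : Fin t → ℤ) (a : Fin t → ℕ) {i j : Fin t} (h : ¬AffRelMod p (A i) (A j)) :
    alphaD A b (fun r => p ^ a r) ≤ ((p : ℝ) ^ (a i + a j))⁻¹ := by
  obtain ⟨k, l, hkl⟩ : ∃ k l, ¬(p : ℤ) ∣ A i k * A j l - A i l * A j k := by
    by_contra! hdvd
    exact h (affRelMod_of_forall_dvd_minor hp.ne_one hdvd)
  have hcop : IsCoprime (A i k * A j l - A i l * A j k) ((p : ℤ) ^ univ.sup a) :=
    ((Nat.prime_iff_prime_int.mp hp).coprime_iff_not_dvd.mpr hkl).symm.pow_right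
  have hlcm : univ.lcm (fun r => p ^ a r) ∣ p ^ univ.sup a :=
    Finset.lcm_dvd fun r _ => pow_dvd_pow p (le_sup (mem_univ r))
  calc alphaD A b (fun r => p ^ a r) ≤ (((p ^ a i : ℕ) : ℝ) * (p ^ a j : ℕ))⁻¹ :=
        alphaD_le_inv_mul_of_isCoprime A b _ (fun r => pow_ne_zero _ hp.ne_zero)
          (hcop.of_isCoprime_of_dvd_right (by exact_mod_cast hlcm))
    _ = ((p : ℝ) ^ (a i + a j))⁻¹ := by push_cast; rw [pow_add]

theorem alphaD_prime_power_bounds_general (d t : ℕ)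
    (A : Fin t → Fin d → ℤ) (b : Fin t → ℤ)
    (p : ℕ) (hp : p.Prime) (a : Fin t → ℕ) :
    (∀ i j : Fin t, i ≠ j → 1 ≤ a i → 1 ≤ a j → ¬AffRelMod p (A i) (A j) →
        alphaD A b (fun k => p ^ a k) ≤ ((p : ℝ) ^ (a i + a j))⁻¹) ∧
    (¬Exceptional A p → (∃ i j : Fin t, i ≠ j ∧ a i ≠ 0 ∧ a j ≠ 0) →
        alphaD A b (fun k => p ^ a k) ≤
          ((p : ℝ) ^ ((univ : Finset (Fin t)).sup a + 1))⁻¹) := by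
  refine ⟨fun i j _ _ _ h => alphaD_pow_le_of_not_affRelMod hp A b a h, ?_⟩
  rintro hnex ⟨i, j, hij, hai, haj⟩
  obtain ⟨k₀, -, hk₀⟩ := exists_mem_eq_sup univ ⟨i, mem_univ i⟩ a
  obtain ⟨j', hne, haj'⟩ : ∃ j', k₀ ≠ j' ∧ a j' ≠ 0 := by
    by_cases h : k₀ = i
    · exact ⟨j, h ▸ hij, haj⟩
    · exact ⟨i, h, hai⟩
  calc alphaD A b (fun k => p ^ a k) ≤ ((p : ℝ) ^ (a k₀ + a j'))⁻¹ :=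
        alphaD_pow_le_of_not_affRelMod hp A b a fun h => hnex ⟨k₀, j', hne, h⟩
    _ ≤ ((p : ℝ) ^ (univ.sup a + 1))⁻¹ :=
        inv_anti₀ (pow_pos (by exact_mod_cast hp.pos) _)
          (pow_le_pow_right₀ (by exact_mod_cast hp.one_lt.le) (by omega))

/-- **Bounds on local divisor densities at prime powers.**
(a) If `i ≠ j`, `a_i, a_j ≥ 1` and `ψ_i, ψ_j` are not affinely related mod `p`,
then `α(p^{a_1},…,p^{a_t}) ≤ p^{-a_i-a_j}`.
(b) If `p` is unexceptional and at least two exponents are nonzero, then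
`α(p^{a_1},…,p^{a_t}) ≤ p^{-(max_k a_k)-1}`. -/
theorem alphaD_prime_power_bounds (d t : ℕ) (hd : 0 < d) (ht : 0 < t)
    (A : Fin t → Fin d → ℤ) (b : Fin t → ℤ) (hsys : IsSystem A b)
    (p : ℕ) (hp : p.Prime) (a : Fin t → ℕ) :
    (∀ i j : Fin t, i ≠ j → 1 ≤ a i → 1 ≤ a j → ¬AffRelMod p (A i) (A j) →
        alphaD A b (fun k => p ^ a k) ≤ ((p : ℝ) ^ (a i + a j))⁻¹) ∧
    (¬Exceptional A p → (∃ i j : Fin t, i ≠ j ∧ a i ≠ 0 ∧ a j ≠ 0) →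
        alphaD A b (fun k => p ^ a k) ≤
          ((p : ℝ) ^ ((univ : Finset (Fin t)).sup a + 1))⁻¹) :=
  alphaD_prime_power_bounds_general d t A b p hp a

end DivisorCorr
end
end

section
/- Contribution from dependent divisibility events. Let Ψ = (ψ_1, …, ψ_t) : ℤ^d → ℤ^t be a system of affine-linear forms whose linear coefficients are bounded in absolute value by L, and let p be a prime that is not exceptional for Ψ. Then Σ α(p^{a_1}, …, p^{a_t}) ≪_{t,d,L} p^{−2}, where the sum is over all t-tuples (a_1, …, a_t) of non-negative integers with at least two nonzero entries. -/
open MeasureTheory Finset Filter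
open scoped Classical BigOperators

noncomputable section

namespace DivisorCorr

/-!
If `ψ_i` and `ψ_j` are not affinely related modulo `p`, some `2 × 2` minor of their linear parts
is a unit modulo `p`, so by Cramer's rule `n ↦ (ψ̇_i(n), ψ̇_j(n))` maps `(ℤ/p^M)^d` onto
`(ℤ/p^M)^2`. Hence the two congruences `p^{a_i} ∣ ψ_i(n)`, `p^{a_j} ∣ ψ_j(n)` alone already cut out
a set of density `p^{-a_i-a_j}`, and `α(p^{a_1},…,p^{a_t}) ≤ p^{-a_i-a_j}`. Taking `a_i` maximal
and `a_j ≥ 1` another nonzero exponent, this is at most `2 p^{-2} 2^{-a_i} ≤ 2 p^{-2} r^{Σ_k a_k}`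
with `r = 2^{-1/t}`, and `Σ_a r^{Σ_k a_k} = (1 - r)^{-t}`.
-/

lemma surjective_dotProduct_pair {R ι : Type*} [CommRing R] [Fintype ι] [DecidableEq ι]
    {u v : ι → R} {k l : ι} (h : IsUnit (u k * v l - u l * v k)) :
    Function.Surjective fun x : ι → R => (u ⬝ᵥ x, v ⬝ᵥ x) := by
  by_cases hkl : k = l
  · subst hkl
    have : Subsingleton R := subsingleton_of_zero_eq_one (isUnit_zero_iff.mp (by simpa using h))
    exact fun y => ⟨0, Subsingleton.elim _ _⟩
  rintro ⟨y, z⟩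
  obtain ⟨e, he⟩ := h.exists_right_inv
  -- Cramer's rule on the coordinates `k` and `l`
  refine ⟨Pi.single k (e * (v l * y - u l * z)) + Pi.single l (e * (u k * z - v k * y)), ?_⟩
  simp only [dotProduct_add, dotProduct_single, Prod.mk.injEq]
  constructor
  · linear_combination y * he
  · linear_combination z * he

lemma card_fiber_mul_card_of_surjective {G H : Type*} [AddGroup G] [Fintype G] [AddGroup H]
    [Fintype H] [DecidableEq H] (f : G →+ H) (hf : Function.Surjective f) (c : H) :
    #{x | f x = c} * Fintype.card H = Fintype.card G := by
  have hfiber : ∀ c', #{x | f x = c'} = #{x | f x = c} := fun c' =>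
    AddMonoidHom.card_fiber_eq_of_mem_range f (hf c') (hf c)
  calc #{x | f x = c} * Fintype.card H = ∑ c', #{x | f x = c'} := by
        rw [Finset.sum_congr rfl fun c' _ => hfiber c', Finset.sum_const, Finset.card_univ,
          smul_eq_mul, mul_comm]
    _ = Fintype.card G :=
        (Finset.card_eq_sum_card_fiberwise fun x _ => Finset.mem_univ (f x)).symm

lemma card_filter_piFinset_range {ι : Type*} [Fintype ι] [DecidableEq ι] (m : ℕ) [NeZero m]
    (P : (ι → ZMod m) → Prop) [DecidablePred P] :
    #{n ∈ Fintype.piFinset fun _ : ι => range m | P fun j => (n j : ZMod m)} = #{x | P x} := by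
  refine Finset.card_nbij' (fun n j => (n j : ZMod m)) (fun x j => (x j).val) ?_ ?_ ?_ ?_
  · intro n hn
    simp_all
  · intro x hx
    simp_all [ZMod.val_lt]
  · intro n hn
    simp only [coe_filter, Fintype.mem_piFinset, mem_range] at hn
    funext j
    exact ZMod.val_cast_of_lt (hn.1 j)
  · intro x _
    funext j
    exact ZMod.natCast_zmod_val (x j)

lemma card_filter_two_congruences {ι : Type*} [Fintype ι] [DecidableEq ι] {m q₁ q₂ : ℕ}
    [NeZero m] (h₁ : q₁ ∣ m) (h₂ : q₂ ∣ m) {u v : ι → ℤ} {k l : ι}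
    (h : IsCoprime (u k * v l - u l * v k) m) (c₁ c₂ : ℤ) :
    #{n ∈ Fintype.piFinset fun _ : ι => range m |
        (q₁ : ℤ) ∣ ∑ j, u j * n j + c₁ ∧ (q₂ : ℤ) ∣ ∑ j, v j * n j + c₂} * (q₁ * q₂) =
      m ^ Fintype.card ι := by
  have : NeZero q₁ := ⟨ne_zero_of_dvd_ne_zero (NeZero.ne m) h₁⟩
  have : NeZero q₂ := ⟨ne_zero_of_dvd_ne_zero (NeZero.ne m) h₂⟩
  let π₁ := ZMod.castHom h₁ (ZMod q₁)
  let π₂ := ZMod.castHom h₂ (ZMod q₂)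
  let F : (ι → ZMod m) →+ ZMod q₁ × ZMod q₂ :=
    AddMonoidHom.mk' (fun x => (π₁ ((u ·) ⬝ᵥ x), π₂ ((v ·) ⬝ᵥ x)))
      (fun x y => by simp [dotProduct_add])
  have hunit : IsUnit ((u k : ZMod m) * v l - u l * v k) := by
    simpa using (ZMod.unitOfIsCoprime _ h).isUnit
  have hF : Function.Surjective F :=
    ((ZMod.castHom_surjective h₁).prodMap (ZMod.castHom_surjective h₂)).comp
      (surjective_dotProduct_pair hunit)
  have hcond : ∀ n : ι → ℕ, F (fun j => n j) = (-(c₁ : ZMod q₁), -(c₂ : ZMod q₂)) ↔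
      (q₁ : ℤ) ∣ ∑ j, u j * n j + c₁ ∧ (q₂ : ℤ) ∣ ∑ j, v j * n j + c₂ := by
    intro n
    simp only [F, AddMonoidHom.mk'_apply, dotProduct, map_sum, map_mul, map_intCast,
      map_natCast, Prod.mk.injEq, eq_neg_iff_add_eq_zero, ← ZMod.intCast_zmod_eq_zero_iff_dvd,
      Int.cast_add, Int.cast_sum, Int.cast_mul, Int.cast_natCast]
  have hfiber := card_fiber_mul_card_of_surjective F hF (-(c₁ : ZMod q₁), -(c₂ : ZMod q₂))
  rw [Fintype.card_prod, ZMod.card, ZMod.card, Fintype.card_fun, ZMod.card] at hfiber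
  rwa [filter_congr fun n _ => (hcond n).symm, card_filter_piFinset_range m fun x => F x = _]

lemma inv_pow_add_le {x : ℝ} (hx : 2 ≤ x) {s c : ℕ} (hs : 1 ≤ s) (hc : 1 ≤ c) :
    (x ^ (s + c))⁻¹ ≤ 2 / x ^ 2 * (1 / 2) ^ s := by
  obtain ⟨n, rfl⟩ := Nat.exists_eq_add_of_le' hs
  have hle : x ^ 2 * 2 ^ n ≤ x ^ (n + 1 + c) :=
    calc x ^ 2 * 2 ^ n ≤ x ^ 2 * x ^ n := by gcongr
      _ = x ^ (n + 2) := by ring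
      _ ≤ x ^ (n + 1 + c) := pow_le_pow_right₀ (by linarith) (by omega)
  calc (x ^ (n + 1 + c))⁻¹ ≤ (x ^ 2 * 2 ^ n)⁻¹ := inv_anti₀ (by positivity) hle
    _ = 2 / x ^ 2 * (1 / 2) ^ (n + 1) := by rw [one_div_pow]; field_simp; ring

lemma sum_pow_sum_le {ι : Type*} [Fintype ι] [DecidableEq ι] {r : ℝ} (hr₀ : 0 ≤ r) (hr₁ : r < 1)
    (u : Finset (ι → ℕ)) : ∑ a ∈ u, r ^ ∑ i, a i ≤ (1 - r)⁻¹ ^ Fintype.card ι :=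
  calc ∑ a ∈ u, r ^ ∑ i, a i = ∑ a ∈ u, ∏ i, r ^ a i := by simp only [prod_pow_eq_pow_sum]
    _ ≤ ∑ a ∈ Fintype.piFinset fun i => u.image (· i), ∏ i, r ^ a i :=
        sum_le_sum_of_subset_of_nonneg
          (fun a ha => Fintype.mem_piFinset.mpr fun i => mem_image_of_mem _ ha)
          fun _ _ _ => by positivity
    _ = ∏ i, ∑ n ∈ u.image (· i), r ^ n := (prod_univ_sum _ _).symm
    _ ≤ ∏ _i : ι, (1 - r)⁻¹ :=
        Finset.prod_le_prod (fun _ _ => by positivity) fun _ _ =>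
          ((summable_geometric_of_lt_one hr₀ hr₁).sum_le_tsum _ fun _ _ => by positivity).trans_eq
            (tsum_geometric_of_lt_one hr₀ hr₁)
    _ = (1 - r)⁻¹ ^ Fintype.card ι := by rw [prod_const, card_univ]

lemma summable_and_tsum_le_of_le_pow_sum {ι : Type*} [Fintype ι] [DecidableEq ι]
    {f : (ι → ℕ) → ℝ} {c r : ℝ} (hr₀ : 0 ≤ r) (hr₁ : r < 1) (hf₀ : 0 ≤ f)
    (hf : ∀ a, f a ≤ c * r ^ ∑ i, a i) :
    Summable f ∧ ∑' a, f a ≤ c * (1 - r)⁻¹ ^ Fintype.card ι := by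
  have hc : 0 ≤ c := by simpa using (hf₀ 0).trans (hf 0)
  have hbound : ∀ u, ∑ a ∈ u, f a ≤ c * (1 - r)⁻¹ ^ Fintype.card ι := fun u =>
    calc ∑ a ∈ u, f a ≤ ∑ a ∈ u, c * r ^ ∑ i, a i := sum_le_sum fun a _ => hf a
      _ = c * ∑ a ∈ u, r ^ ∑ i, a i := (mul_sum _ _ _).symm
      _ ≤ c * (1 - r)⁻¹ ^ Fintype.card ι := by gcongr; exact sum_pow_sum_le hr₀ hr₁ u
  exact ⟨summable_of_sum_le hf₀ hbound, Real.tsum_le_of_sum_le hf₀ hbound⟩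

lemma exists_minor_not_dvd_of_not_affRelMod {d p : ℕ} (hp : p.Prime) {u v : Fin d → ℤ}
    (h : ¬AffRelMod p u v) : ∃ k l, ¬(p : ℤ) ∣ u k * v l - u l * v k := by
  by_contra! hminor
  by_cases hu : ∀ k, (p : ℤ) ∣ u k
  · exact h ⟨1, 0, Or.inl (Int.natCast_dvd_natCast.not.mpr hp.not_dvd_one),
      fun k => by simpa using hu k⟩
  · obtain ⟨k₀, hk₀⟩ := not_forall.mp hu
    exact h ⟨-v k₀, u k₀, Or.inr hk₀, fun k => by
      convert hminor k₀ k using 1; ring⟩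

lemma alphaD_nonneg {d t : ℕ} (A : Fin t → Fin d → ℤ) (b : Fin t → ℤ) (D : Fin t → ℕ) :
    0 ≤ alphaD A b D := by
  unfold alphaD
  positivity

lemma alphaD_le_inv_mul {d t : ℕ} (A : Fin t → Fin d → ℤ) (b : Fin t → ℤ) {D : Fin t → ℕ}
    (hD : ∀ i, D i ≠ 0) {i j : Fin t} {k l : Fin d}
    (h : IsCoprime (A i k * A j l - A i l * A j k) ((univ : Finset (Fin t)).lcm D : ℕ)) :
    alphaD A b D ≤ ((D i : ℝ) * D j)⁻¹ := by
  have hm : (univ : Finset (Fin t)).lcm D ≠ 0 := by simpa [Finset.lcm_eq_zero_iff] using hD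
  have : NeZero ((univ : Finset (Fin t)).lcm D) := ⟨hm⟩
  have hcount := card_filter_two_congruences (dvd_lcm (mem_univ i)) (dvd_lcm (mem_univ j)) h
    (b i) (b j)
  have hsub := Finset.monotone_filter_right
    (Fintype.piFinset fun _ : Fin d => range ((univ : Finset (Fin t)).lcm D))
    (p := fun n => ∀ i, (D i : ℤ) ∣ psiZ A b i fun j => (n j : ℤ))
    (q := fun n => (D i : ℤ) ∣ ∑ k, A i k * n k + b i ∧ (D j : ℤ) ∣ ∑ k, A j k * n k + b j)
    fun n _ hn => ⟨hn i, hn j⟩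
  rw [Fintype.card_fin] at hcount
  have hDi : (0 : ℝ) < D i := by exact_mod_cast Nat.pos_of_ne_zero (hD i)
  have hDj : (0 : ℝ) < D j := by exact_mod_cast Nat.pos_of_ne_zero (hD j)
  rw [alphaD, div_le_iff₀ (by positivity), inv_mul_eq_div, le_div_iff₀ (by positivity)]
  exact_mod_cast (Nat.mul_le_mul_right _ (card_le_card hsub)).trans hcount.le

lemma alphaD_pow_le {d t p : ℕ} (hp : p.Prime) (A : Fin t → Fin d → ℤ) (b : Fin t → ℤ)
    (a : Fin t → ℕ) {i j : Fin t} (h : ¬AffRelMod p (A i) (A j)) :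
    alphaD A b (fun i => p ^ a i) ≤ ((p : ℝ) ^ (a i + a j))⁻¹ := by
  obtain ⟨k, l, hkl⟩ := exists_minor_not_dvd_of_not_affRelMod hp h
  have hcop : IsCoprime (A i k * A j l - A i l * A j k) ((p : ℤ) ^ (univ : Finset (Fin t)).sup a) :=
    ((Nat.prime_iff_prime_int.mp hp).coprime_iff_not_dvd.mpr hkl).symm.pow_right
  have hlcm : (((univ : Finset (Fin t)).lcm fun i => p ^ a i : ℕ) : ℤ) ∣
      (p : ℤ) ^ (univ : Finset (Fin t)).sup a := by
    exact_mod_cast Finset.lcm_dvd fun i _ => pow_dvd_pow p (le_sup (mem_univ i))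
  simpa [pow_add] using
    alphaD_le_inv_mul A b (fun i => pow_ne_zero _ hp.ne_zero) (hcop.of_isCoprime_of_dvd_right hlcm)

lemma alphaD_pow_le_of_two_le_card {d t p : ℕ} (hp : p.Prime) {A : Fin t → Fin d → ℤ}
    (b : Fin t → ℤ) (hexc : ¬Exceptional A p) {r : ℝ} (hr₀ : 0 ≤ r) (hr₁ : r ≤ 1)
    (hrt : r ^ t = 1 / 2) {a : Fin t → ℕ} (ha : 2 ≤ #{i | a i ≠ 0}) :
    alphaD A b (fun i => p ^ a i) ≤ 2 / (p : ℝ) ^ 2 * r ^ ∑ i, a i := by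
  have : Nonempty (Fin t) := by
    obtain ⟨i, -⟩ := card_pos.mp (zero_lt_two.trans_le ha)
    exact ⟨i⟩
  obtain ⟨i, hi⟩ := Finite.exists_max a
  obtain ⟨j, hj, hji⟩ := exists_mem_ne ha i
  have hj₀ : 1 ≤ a j := Nat.one_le_iff_ne_zero.mpr (mem_filter.mp hj).2
  have hsum : ∑ k, a k ≤ t * a i := by
    simpa using Finset.sum_le_card_nsmul univ a (a i) fun k _ => hi k
  calc alphaD A b (fun i => p ^ a i) ≤ ((p : ℝ) ^ (a i + a j))⁻¹ :=
        alphaD_pow_le hp A b a fun h => hexc ⟨i, j, hji.symm, h⟩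
    _ ≤ 2 / (p : ℝ) ^ 2 * (1 / 2) ^ a i :=
        inv_pow_add_le (by exact_mod_cast hp.two_le) (hj₀.trans (hi j)) hj₀
    _ = 2 / (p : ℝ) ^ 2 * r ^ (t * a i) := by rw [pow_mul, hrt]
    _ ≤ 2 / (p : ℝ) ^ 2 * r ^ ∑ k, a k :=
        mul_le_mul_of_nonneg_left (pow_le_pow_of_le_one hr₀ hr₁ hsum) (by positivity)

theorem dependent_divisibility_events_general (t d L : ℕ) (ht : 0 < t) :
    ∃ C : ℝ, 0 < C ∧
      ∀ (A : Fin t → Fin d → ℤ) (b : Fin t → ℤ), IsSystem A b → CoeffBound A L →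
      ∀ p : ℕ, p.Prime → ¬Exceptional A p →
        Summable (fun a : Fin t → ℕ =>
          if 2 ≤ ((univ : Finset (Fin t)).filter (fun i => a i ≠ 0)).card then
            alphaD A b (fun i => p ^ a i) else 0) ∧
        (∑' a : Fin t → ℕ,
            if 2 ≤ ((univ : Finset (Fin t)).filter (fun i => a i ≠ 0)).card then
              alphaD A b (fun i => p ^ a i) else 0) ≤ C / (p : ℝ) ^ 2 := by
  obtain ⟨r, hr₀, hr₁, hrt⟩ : ∃ r : ℝ, 0 ≤ r ∧ r < 1 ∧ r ^ t = 1 / 2 :=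
    ⟨(1 / 2) ^ (t⁻¹ : ℝ), by positivity,
      Real.rpow_lt_one (by norm_num) (by norm_num) (by positivity),
      Real.rpow_inv_natCast_pow (by norm_num) ht.ne'⟩
  refine ⟨2 * (1 - r)⁻¹ ^ t, by have := sub_pos.mpr hr₁; positivity, ?_⟩
  intro A b _ _ p hp hexc
  refine (summable_and_tsum_le_of_le_pow_sum hr₀ hr₁ (c := 2 / (p : ℝ) ^ 2) ?_ ?_).imp_right
    fun h => h.trans_eq ?_
  · intro a
    dsimp only [Pi.zero_apply]
    split_ifs
    exacts [alphaD_nonneg A b _, le_rfl]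
  · intro a
    split_ifs with ha
    · exact alphaD_pow_le_of_two_le_card hp b hexc hr₀ hr₁.le hrt ha
    · positivity
  · rw [Fintype.card_fin]
    ring

/-- **Contribution from dependent divisibility events.** For an unexceptional prime `p`,
`Σ_{(a_1,…,a_t), at least two nonzero} α(p^{a_1},…,p^{a_t}) ≪_{t,d,L} p^{-2}`. -/
theorem dependent_divisibility_events (t d L : ℕ) (ht : 0 < t) (hd : 0 < d) (hL : 0 < L) :
    ∃ C : ℝ, 0 < C ∧
      ∀ (A : Fin t → Fin d → ℤ) (b : Fin t → ℤ), IsSystem A b → CoeffBound A L →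
      ∀ p : ℕ, p.Prime → ¬Exceptional A p →
        Summable (fun a : Fin t → ℕ =>
          if 2 ≤ ((univ : Finset (Fin t)).filter (fun i => a i ≠ 0)).card then
            alphaD A b (fun i => p ^ a i) else 0) ∧
        (∑' a : Fin t → ℕ,
            if 2 ≤ ((univ : Finset (Fin t)).filter (fun i => a i ≠ 0)).card then
              alphaD A b (fun i => p ^ a i) else 0) ≤ C / (p : ℝ) ^ 2 :=
  dependent_divisibility_events_general t d L ht

end DivisorCorr
end
end

section
/- k-th moment bound for the divisor function along affine-linear forms. Let k, t, m, L be positive integers, let N ≥ 2, let Ψ = (ψ_1, …, ψ_t) : ℤ^m → ℤ^t be a system of affine-linear forms whose linear coefficients are bounded in absolute value by L, and let K ⊆ [−N, N]^m be a convex set with Ψ(K) ⊆ [1, N]^t. Then Σ_{n ∈ ℤ^m ∩ K} ∏_{i=1}^t τ(ψ_i(n))^k ≪_{k,t,m,L} N^m (log N)^{2^{tk} − 1}. -/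
open MeasureTheory Finset Filter
open scoped Classical BigOperators

noncomputable section

namespace DivisorCorr

/-! Bounding a product by its largest factor, `∏ᵢ τ(ψᵢ(n))^k ≤ Σᵢ τ(ψᵢ(n))^{tk}`, reduces the
estimate to a single form `ψᵢ`. Some coordinate `n_j` enters `ψᵢ` with a nonzero coefficient, so
replacing `n_j` by `ψᵢ(n)` is injective, and the sum of `τ(ψᵢ(n))^{tk}` over `K` is at most
`(2N+1)^{m-1} Σ_{v ≤ N} τ(v)^{tk}`. Finally `Σ_{v ≤ N} τ(v)^K ≤ N (1 + log N)^{2^K - 1}` by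
induction on `K`: since `τ(n)^{K+1} = Σ_{de = n} τ(n)^K ≤ Σ_{de = n} τ(d)^K τ(e)^K`, the
`(K+1)`-st moment is bounded by the `K`-th one together with the logarithmic moment
`Σ_{d ≤ N} τ(d)^K / d ≤ (1 + log N)^{2^K}`, which satisfies the same recursion starting from the
harmonic sum. -/

theorem card_divisors_mul_le (d e : ℕ) : #(d * e).divisors ≤ #d.divisors * #e.divisors := by
  rw [Nat.divisors_mul]
  exact card_mul_le

theorem sum_mul_card_divisors_le {f : ℕ → ℝ} (hf : ∀ d e, f (d * e) ≤ f d * f e) (N : ℕ) :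
    ∑ n ∈ Ioc 0 N, f n * #n.divisors ≤ ∑ d ∈ Ioc 0 N, f d * ∑ e ∈ Ioc 0 (N / d), f e := by
  let F : ArithmeticFunction ℝ := ⟨fun n => if n = 0 then 0 else f n, if_pos rfl⟩
  have hF : ∀ n, n ≠ 0 → F n = f n := fun n hn => if_neg hn
  calc ∑ n ∈ Ioc 0 N, f n * #n.divisors ≤ ∑ n ∈ Ioc 0 N, (F * F) n := by
        refine sum_le_sum fun n _ => ?_
        rw [ArithmeticFunction.mul_apply, Nat.sum_divisorsAntidiagonal (fun d e => F d * F e),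
          mul_comm, ← nsmul_eq_mul, ← sum_const]
        refine sum_le_sum fun d hd => ?_
        obtain ⟨hdn, hn⟩ := Nat.mem_divisors.mp hd
        have hd0 : d ≠ 0 := ne_zero_of_dvd_ne_zero hn hdn
        have he0 : n / d ≠ 0 := (Nat.div_pos (Nat.le_of_dvd (Nat.pos_of_ne_zero hn) hdn)
          (Nat.pos_of_ne_zero hd0)).ne'
        rw [hF d hd0, hF _ he0]
        simpa only [Nat.mul_div_cancel' hdn] using hf d (n / d)
    _ = ∑ d ∈ Ioc 0 N, f d * ∑ e ∈ Ioc 0 (N / d), f e := by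
        rw [ArithmeticFunction.sum_Ioc_mul_eq_sum_sum]
        refine sum_congr rfl fun d hd => ?_
        rw [hF d (mem_Ioc.mp hd).1.ne']
        exact congrArg _ (sum_congr rfl fun e he => hF e (mem_Ioc.mp he).1.ne')

theorem log_natCast_le_log_natCast {n N : ℕ} (h : n ≤ N) : Real.log n ≤ Real.log N := by
  rcases n.eq_zero_or_pos with rfl | hn
  · simpa using Real.log_natCast_nonneg N
  · exact Real.log_le_log (by exact_mod_cast hn) (by exact_mod_cast h)

theorem one_add_log_le_mul_log {x : ℝ} (hx : 2 ≤ x) :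
    1 + Real.log x ≤ (1 + (Real.log 2)⁻¹) * Real.log x := by
  have hlog2 : 0 < Real.log 2 := Real.log_pos one_lt_two
  have h : Real.log 2 ≤ Real.log x := Real.log_le_log two_pos hx
  have : 1 ≤ (Real.log 2)⁻¹ * Real.log x := by
    rw [← div_eq_inv_mul, le_div_iff₀ hlog2]; linarith
  linarith

theorem sum_Ioc_card_divisors_pow_div_le (K N : ℕ) :
    ∑ n ∈ Ioc 0 N, (#n.divisors : ℝ) ^ K / n ≤ (1 + Real.log N) ^ 2 ^ K := by
  induction K with
  | zero =>
    have harm := harmonic_le_one_add_log N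
    rw [harmonic_eq_sum_Icc] at harm
    simpa [← Finset.Icc_add_one_left_eq_Ioc] using harm
  | succ K ih =>
    set f : ℕ → ℝ := fun n => (#n.divisors : ℝ) ^ K / n
    have hf0 : ∀ n, 0 ≤ f n := fun n => by positivity
    have hf : ∀ d e, f (d * e) ≤ f d * f e := fun d e => by
      simp only [f, Nat.cast_mul, div_mul_div_comm, ← mul_pow]
      gcongr
      exact_mod_cast card_divisors_mul_le d e
    calc ∑ n ∈ Ioc 0 N, (#n.divisors : ℝ) ^ (K + 1) / n
        = ∑ n ∈ Ioc 0 N, f n * #n.divisors := sum_congr rfl fun n _ => by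
          simp only [f]; ring
      _ ≤ ∑ d ∈ Ioc 0 N, f d * ∑ e ∈ Ioc 0 (N / d), f e := sum_mul_card_divisors_le hf N
      _ ≤ ∑ d ∈ Ioc 0 N, f d * ∑ e ∈ Ioc 0 N, f e := by
          gcongr with d
          exact Nat.div_le_self N d
      _ = (∑ n ∈ Ioc 0 N, f n) ^ 2 := by rw [← sum_mul, sq]
      _ ≤ ((1 + Real.log N) ^ 2 ^ K) ^ 2 := pow_le_pow_left₀ (sum_nonneg fun n _ => hf0 n) ih 2
      _ = (1 + Real.log N) ^ 2 ^ (K + 1) := by rw [← pow_mul, pow_succ]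

theorem sum_Ioc_card_divisors_pow_le (K N : ℕ) :
    ∑ n ∈ Ioc 0 N, (#n.divisors : ℝ) ^ K ≤ N * (1 + Real.log N) ^ (2 ^ K - 1) := by
  induction K generalizing N with
  | zero => simp
  | succ K ih =>
    set f : ℕ → ℝ := fun n => (#n.divisors : ℝ) ^ K
    have hf : ∀ d e, f (d * e) ≤ f d * f e := fun d e => by
      simp only [f, ← mul_pow]
      gcongr
      exact_mod_cast card_divisors_mul_le d e
    have inner : ∀ d ∈ Ioc 0 N,
        ∑ e ∈ Ioc 0 (N / d), f e ≤ (N / d : ℝ) * (1 + Real.log N) ^ (2 ^ K - 1) := fun d _ =>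
      calc ∑ e ∈ Ioc 0 (N / d), f e ≤ (N / d : ℕ) * (1 + Real.log (N / d : ℕ)) ^ (2 ^ K - 1) :=
            ih (N / d)
        _ ≤ (N / d : ℝ) * (1 + Real.log N) ^ (2 ^ K - 1) := by
            gcongr ?_ * (1 + ?_) ^ _
            · exact Nat.cast_div_le
            · exact log_natCast_le_log_natCast (Nat.div_le_self N d)
    calc ∑ n ∈ Ioc 0 N, (#n.divisors : ℝ) ^ (K + 1)
        = ∑ n ∈ Ioc 0 N, f n * #n.divisors := sum_congr rfl fun n _ => pow_succ _ _
      _ ≤ ∑ d ∈ Ioc 0 N, f d * ∑ e ∈ Ioc 0 (N / d), f e := sum_mul_card_divisors_le hf N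
      _ ≤ ∑ d ∈ Ioc 0 N, f d * ((N / d : ℝ) * (1 + Real.log N) ^ (2 ^ K - 1)) := by
          gcongr with d hd
          exact inner d hd
      _ = N * (1 + Real.log N) ^ (2 ^ K - 1) * ∑ d ∈ Ioc 0 N, f d / d := by
          rw [mul_sum]
          exact sum_congr rfl fun d _ => by ring
      _ ≤ N * (1 + Real.log N) ^ (2 ^ K - 1) * (1 + Real.log N) ^ 2 ^ K := by
          gcongr
          exact sum_Ioc_card_divisors_pow_div_le K N
      _ = N * (1 + Real.log N) ^ (2 ^ (K + 1) - 1) := by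
          rw [mul_assoc, ← pow_add]
          congr 3
          have := Nat.one_le_two_pow (n := K)
          rw [pow_succ]
          omega

theorem prod_le_sum_pow_card {ι : Type*} [Fintype ι] [Nonempty ι] {x : ι → ℝ}
    (hx : ∀ i, 0 ≤ x i) : ∏ i, x i ≤ ∑ i, x i ^ Fintype.card ι := by
  obtain ⟨i₀, -, hmax⟩ := exists_max_image univ x univ_nonempty
  calc ∏ i, x i ≤ ∏ _i : ι, x i₀ := prod_le_prod (fun i _ => hx i) fun i _ => hmax i (mem_univ i)
    _ = x i₀ ^ Fintype.card ι := by rw [prod_const, card_univ]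
    _ ≤ ∑ i, x i ^ Fintype.card ι :=
      single_le_sum (f := fun i => x i ^ Fintype.card ι) (fun i _ => pow_nonneg (hx i) _)
        (mem_univ i₀)

theorem sum_comp_le_card_pow_mul_sum {m : ℕ} {s u : Finset ℤ} (hus : u ⊆ s)
    {S : Finset (Fin m → ℤ)} (hS : ∀ n ∈ S, ∀ j, n j ∈ s) {φ : (Fin m → ℤ) → ℤ}
    (hφ : ∀ n ∈ S, φ n ∈ u) (j₀ : Fin m)
    (hinj : ∀ n n', (∀ j ≠ j₀, n j = n' j) → φ n = φ n' → n = n') {g : ℤ → ℝ}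
    (hg : ∀ x, 0 ≤ g x) :
    ∑ n ∈ S, g (φ n) ≤ #s ^ (m - 1) * ∑ x ∈ u, g x := by
  set G : ℤ → ℝ := fun x => if x ∈ u then g x else 0
  have hG : ∀ x, 0 ≤ G x := fun x => by
    dsimp only [G]
    split_ifs
    exacts [hg x, le_rfl]
  set Φ : (Fin m → ℤ) → (Fin m → ℤ) := fun n => Function.update n j₀ (φ n)
  have hΦ : Set.InjOn Φ S := fun n _ n' _ h => hinj n n'
    (fun j hj => by simpa [Φ, hj] using congrFun h j) (by simpa [Φ] using congrFun h j₀)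
  calc ∑ n ∈ S, g (φ n) = ∑ n ∈ S, G (Φ n j₀) := sum_congr rfl fun n hn => by simp [G, Φ, hφ n hn]
    _ = ∑ y ∈ S.image Φ, G (y j₀) := (sum_image (f := fun y => G (y j₀)) hΦ).symm
    _ ≤ ∑ y ∈ Fintype.piFinset fun _ => s, G (y j₀) := by
        refine sum_le_sum_of_subset_of_nonneg ?_ fun y _ _ => hG _
        simp only [image_subset_iff, Fintype.mem_piFinset]
        intro n hn j
        by_cases hj : j = j₀
        · subst hj; simpa [Φ] using hus (hφ n hn)
        · simpa [Φ, hj] using hS n hn j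
    _ = #s ^ (m - 1) * ∑ x ∈ u, g x := by
        rw [Fintype.sum_piFinset_apply, nsmul_eq_mul, Fintype.card_fin, sum_ite_mem,
          inter_eq_right.mpr hus]
        push_cast
        rfl

theorem psiZ_injective_coord {d t : ℕ} {A : Fin t → Fin d → ℤ} (b : Fin t → ℤ) {i : Fin t}
    {j₀ : Fin d} (hA : A i j₀ ≠ 0) {n n' : Fin d → ℤ} (hn : ∀ j ≠ j₀, n j = n' j)
    (hψ : psiZ A b i n = psiZ A b i n') : n = n' := by
  have hdiff : psiZ A b i n - psiZ A b i n' = A i j₀ * (n j₀ - n' j₀) := by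
    simp only [psiZ, add_sub_add_right_eq_sub, ← sum_sub_distrib, ← mul_sub]
    exact sum_eq_single j₀ (fun j _ hj => by rw [hn j hj, sub_self, mul_zero]) (by simp)
  have h₀ : n j₀ = n' j₀ := by
    rw [hψ, sub_self, eq_comm, mul_eq_zero] at hdiff
    exact sub_eq_zero.mp (hdiff.resolve_left hA)
  funext j
  by_cases hj : j = j₀
  · exact hj ▸ h₀
  · exact hn j hj

theorem sum_Icc_natAbs (N : ℕ) (f : ℕ → ℝ) :
    ∑ x ∈ Icc (1 : ℤ) N, f x.natAbs = ∑ v ∈ Ioc 0 N, f v :=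
  sum_nbij' Int.natAbs (fun v => (v : ℤ))
    (fun x hx => by simp only [mem_Icc, mem_Ioc] at hx ⊢; omega)
    (fun v hv => by simp only [mem_Icc, mem_Ioc] at hv ⊢; omega)
    (fun x hx => by simp only [mem_Icc] at hx; omega) (fun v _ => Int.natAbs_natCast v)
    (fun _ _ => rfl)

theorem psiZ_mem_Icc {d t N : ℕ} {A : Fin t → Fin d → ℤ} {b : Fin t → ℤ} {K : Set (Fin d → ℝ)}
    (hK : MapsIn A b N K) {n : Fin d → ℤ} (hn : n ∈ pts d N K) (i : Fin t) :
    psiZ A b i n ∈ Icc (1 : ℤ) N := by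
  have h := hK _ (mem_filter.mp hn).2 i
  have hcast : (psiZ A b i n : ℝ) = psiR A b i fun j => (n j : ℝ) := by
    simp [psiZ, psiR]
  rw [← hcast, Set.mem_Icc] at h
  exact mem_Icc.mpr ⟨by exact_mod_cast h.1, by exact_mod_cast h.2⟩

theorem sum_pts_tauZ_pow_le {m t N : ℕ} {A : Fin t → Fin m → ℤ} (b : Fin t → ℤ) {i : Fin t}
    {j₀ : Fin m} (hA : A i j₀ ≠ 0) {K : Set (Fin m → ℝ)} (hK : MapsIn A b N K) (E : ℕ) :
    ∑ n ∈ pts m N K, (tauZ (psiZ A b i n) : ℝ) ^ E ≤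
      (2 * N + 1) ^ (m - 1) * (N * (1 + Real.log N) ^ (2 ^ E - 1)) := by
  have hfibre := sum_comp_le_card_pow_mul_sum (Icc_subset_Icc_left (by omega : (-(N : ℤ)) ≤ 1))
    (fun n hn => Fintype.mem_piFinset.mp (mem_filter.mp hn).1)
    (fun n hn => psiZ_mem_Icc hK hn i) j₀ (fun n n' => psiZ_injective_coord b hA)
    (g := fun x => (#x.natAbs.divisors : ℝ) ^ E) fun x => by positivity
  rw [sum_Icc_natAbs N (fun v => (#v.divisors : ℝ) ^ E), Int.card_Icc] at hfibre
  have hcard : (((N : ℤ) + 1 - -(N : ℤ)).toNat : ℝ) = 2 * N + 1 := by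
    rw [show ((N : ℤ) + 1 - -(N : ℤ)).toNat = 2 * N + 1 by omega]
    push_cast; ring
  rw [hcard] at hfibre
  exact hfibre.trans (by gcongr; exact sum_Ioc_card_divisors_pow_le E N)

theorem sum_pts_prod_tauZ_pow_le {m t N : ℕ} (ht : 0 < t) {A : Fin t → Fin m → ℤ}
    (hA : ∀ i, ∃ j, A i j ≠ 0) (b : Fin t → ℤ) {K : Set (Fin m → ℝ)} (hK : MapsIn A b N K)
    (k : ℕ) :
    ∑ n ∈ pts m N K, ∏ i, (tauZ (psiZ A b i n) : ℝ) ^ k ≤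
      t * ((2 * N + 1) ^ (m - 1) * (N * (1 + Real.log N) ^ (2 ^ (t * k) - 1))) := by
  have : Nonempty (Fin t) := ⟨⟨0, ht⟩⟩
  calc ∑ n ∈ pts m N K, ∏ i, (tauZ (psiZ A b i n) : ℝ) ^ k
      ≤ ∑ n ∈ pts m N K, ∑ i, (tauZ (psiZ A b i n) : ℝ) ^ (t * k) := by
        refine sum_le_sum fun n _ => (prod_le_sum_pow_card fun i => by positivity).trans_eq ?_
        simp only [Fintype.card_fin, ← pow_mul, mul_comm k t]
    _ = ∑ i, ∑ n ∈ pts m N K, (tauZ (psiZ A b i n) : ℝ) ^ (t * k) := sum_comm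
    _ ≤ ∑ _i : Fin t, (2 * N + 1 : ℝ) ^ (m - 1) * (N * (1 + Real.log N) ^ (2 ^ (t * k) - 1)) :=
        sum_le_sum fun i _ => by
          obtain ⟨j, hj⟩ := hA i
          exact sum_pts_tauZ_pow_le b hj hK _
    _ = _ := by rw [sum_const, card_univ, Fintype.card_fin, nsmul_eq_mul]

theorem kth_moment_bound_general (k t m L : ℕ) (ht : 0 < t) :
    ∃ C : ℝ, 0 < C ∧ ∀ N : ℕ, 2 ≤ N →
      ∀ (A : Fin t → Fin m → ℤ) (b : Fin t → ℤ), IsSystem A b → CoeffBound A L →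
      ∀ K : Set (Fin m → ℝ), Convex ℝ K → InBox m N K → MapsIn A b N K →
        (∑ n ∈ pts m N K, ∏ i, ((tauZ (psiZ A b i n) : ℝ)) ^ k) ≤
          C * (N : ℝ) ^ m * Real.log N ^ (2 ^ (t * k) - 1) := by
  set E := 2 ^ (t * k) - 1
  refine ⟨t * 3 ^ (m - 1) * (1 + (Real.log 2)⁻¹) ^ E, by positivity, ?_⟩
  intro N hN A b hsys _ K _ _ hK
  obtain ⟨j₀, -⟩ := hsys.1 ⟨0, ht⟩
  have hN2 : (2 : ℝ) ≤ N := by exact_mod_cast hN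
  calc ∑ n ∈ pts m N K, ∏ i, (tauZ (psiZ A b i n) : ℝ) ^ k
      ≤ t * ((2 * N + 1) ^ (m - 1) * (N * (1 + Real.log N) ^ E)) :=
        sum_pts_prod_tauZ_pow_le ht hsys.1 b hK k
    _ ≤ t * ((3 * N) ^ (m - 1) * (N * ((1 + (Real.log 2)⁻¹) * Real.log N) ^ E)) := by
        gcongr
        · linarith
        · exact one_add_log_le_mul_log hN2
    _ = t * 3 ^ (m - 1) * (1 + (Real.log 2)⁻¹) ^ E * N ^ m * Real.log N ^ E := by
        rw [mul_pow, mul_pow, ← pow_sub_one_mul j₀.pos.ne' (N : ℝ)]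
        ring

/-- **k-th moment bound for the divisor function along affine-linear forms.**
`Σ_{n ∈ ℤ^m ∩ K} ∏_i τ(ψ_i(n))^k ≪_{k,t,m,L} N^m (log N)^{2^{tk}-1}`. -/
theorem kth_moment_bound (k t m L : ℕ) (hk : 0 < k) (ht : 0 < t) (hm : 0 < m) (hL : 0 < L) :
    ∃ C : ℝ, 0 < C ∧ ∀ N : ℕ, 2 ≤ N →
      ∀ (A : Fin t → Fin m → ℤ) (b : Fin t → ℤ), IsSystem A b → CoeffBound A L →
      ∀ K : Set (Fin m → ℝ), Convex ℝ K → InBox m N K → MapsIn A b N K →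
        (∑ n ∈ pts m N K, ∏ i, ((tauZ (psiZ A b i n) : ℝ)) ^ k) ≤
          C * (N : ℝ) ^ m * Real.log N ^ (2 ^ (t * k) - 1) :=
  kth_moment_bound_general k t m L ht

end DivisorCorr
end
end

section
/- Sum of reciprocals of least common multiples. For every integer ℓ ≥ 1 and every integer N ≥ 2, Σ_{1 ≤ d_1, …, d_ℓ ≤ N} 1/lcm(d_1, …, d_ℓ) ≤ (1 + log N)^{2^ℓ − 1}; in particular this sum is ≪_ℓ (log N)^{2^ℓ − 1}. -/
open MeasureTheory Finset Filter
open scoped Classical BigOperators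

noncomputable section

namespace DivisorCorr

section LcmAux

variable {ℓ : ℕ}

/-- Level set of the `p`-adic valuations of `d` at level `t`. -/
def Sfun (d : Fin ℓ → ℕ) (p t : ℕ) : Finset (Fin ℓ) :=
  univ.filter fun i => t ≤ (d i).factorization p

/-- Number of levels whose level set is exactly `S`. -/
def bval (d : Fin ℓ → ℕ) (p : ℕ) (S : Finset (Fin ℓ)) : ℕ :=
  ((Finset.Icc 1 (((univ : Finset (Fin ℓ)).lcm d).factorization p)).filter
    fun t => Sfun d p t = S).card

/-- The subset-indexed factors of the lcm. -/
def eeval (d : Fin ℓ → ℕ) (S : Finset (Fin ℓ)) : ℕ :=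
  ∏ p ∈ ((univ : Finset (Fin ℓ)).lcm d).primeFactors, p ^ bval d p S

lemma lcm_ne_zero' {d : Fin ℓ → ℕ} (hd : ∀ i, d i ≠ 0) :
    (univ : Finset (Fin ℓ)).lcm d ≠ 0 := by
  rw [Ne, Finset.lcm_eq_zero_iff]
  rintro ⟨i, -, h⟩
  exact hd i h

lemma factorization_lcm_finset {ι : Type*} (s : Finset ι) (f : ι → ℕ)
    (hf : ∀ i ∈ s, f i ≠ 0) (p : ℕ) :
    (s.lcm f).factorization p = s.sup fun i => (f i).factorization p := by
  classical
  induction s using Finset.induction_on with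
  | empty => simp
  | @insert a s ha ih =>
    have hfa : f a ≠ 0 := hf a (mem_insert_self a s)
    have hfs : ∀ i ∈ s, f i ≠ 0 := fun i hi => hf i (mem_insert_of_mem hi)
    have hl : s.lcm f ≠ 0 := by
      rw [Ne, Finset.lcm_eq_zero_iff]
      rintro ⟨i, hi, h⟩
      exact hfs i hi h
    rw [Finset.lcm_insert, Finset.sup_insert, lcm_eq_nat_lcm,
      Nat.factorization_lcm hfa hl, ← ih hfs]
    rfl

lemma sum_bval (d : Fin ℓ → ℕ) (hd : ∀ i, d i ≠ 0) (p : ℕ) (i : Fin ℓ) :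
    ∑ S : Finset (Fin ℓ), (if i ∈ S then bval d p S else 0)
      = (d i).factorization p := by
  have hM : (d i).factorization p ≤ ((univ : Finset (Fin ℓ)).lcm d).factorization p := by
    rw [factorization_lcm_finset _ _ (fun j _ => hd j)]
    exact Finset.le_sup (f := fun j => (d j).factorization p) (mem_univ i)
  set M := ((univ : Finset (Fin ℓ)).lcm d).factorization p with hMdef
  have key : ∀ S : Finset (Fin ℓ),
      (if i ∈ S then bval d p S else 0)
        = ∑ t ∈ Finset.Icc 1 M, (if Sfun d p t = S then (if i ∈ S then 1 else 0) else 0) := by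
    intro S
    by_cases h : i ∈ S
    · simp only [h, if_true, bval, Finset.card_filter, ← hMdef]
    · simp [h]
  rw [Finset.sum_congr rfl fun S _ => key S, Finset.sum_comm]
  have h2 : ∀ t ∈ Finset.Icc 1 M,
      (∑ S : Finset (Fin ℓ), if Sfun d p t = S then (if i ∈ S then 1 else 0) else 0)
        = (if t ≤ (d i).factorization p then 1 else 0) := by
    intro t _
    rw [Finset.sum_ite_eq]
    simp [Sfun]
  rw [Finset.sum_congr rfl h2, ← Finset.card_filter]
  have h3 : (Finset.Icc 1 M).filter (fun t => t ≤ (d i).factorization p)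
      = Finset.Icc 1 ((d i).factorization p) := by
    ext t
    simp only [Finset.mem_filter, Finset.mem_Icc]
    omega
  rw [h3, Nat.card_Icc]
  omega

lemma sum_bval_total (d : Fin ℓ → ℕ) (hd : ∀ i, d i ≠ 0) (hl : 1 ≤ ℓ) (p : ℕ) :
    ∑ S : Finset (Fin ℓ), (if S.Nonempty then bval d p S else 0)
      = ((univ : Finset (Fin ℓ)).lcm d).factorization p := by
  have hne : Nonempty (Fin ℓ) := ⟨⟨0, hl⟩⟩
  set M := ((univ : Finset (Fin ℓ)).lcm d).factorization p with hMdef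
  have key : ∀ S : Finset (Fin ℓ),
      (if S.Nonempty then bval d p S else 0)
        = ∑ t ∈ Finset.Icc 1 M, (if Sfun d p t = S then (if S.Nonempty then 1 else 0) else 0) := by
    intro S
    by_cases h : S.Nonempty
    · simp only [h, if_true, bval, Finset.card_filter, ← hMdef]
    · simp [h]
  rw [Finset.sum_congr rfl fun S _ => key S, Finset.sum_comm]
  have h2 : ∀ t ∈ Finset.Icc 1 M,
      (∑ S : Finset (Fin ℓ), if Sfun d p t = S then (if S.Nonempty then 1 else 0) else 0)
        = 1 := by
    intro t ht
    rw [Finset.sum_ite_eq]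
    rw [Finset.mem_Icc] at ht
    have hsup : M = univ.sup fun i => (d i).factorization p :=
      factorization_lcm_finset _ _ (fun j _ => hd j) p
    obtain ⟨j, -, hj⟩ := Finset.exists_mem_eq_sup (univ : Finset (Fin ℓ))
      Finset.univ_nonempty (fun i => (d i).factorization p)
    have hjj : j ∈ Sfun d p t := by
      simp only [Sfun, Finset.mem_filter, Finset.mem_univ, true_and]
      omega
    rw [if_pos (Finset.mem_univ _)]
    exact if_pos ⟨j, hjj⟩
  rw [Finset.sum_congr rfl h2]
  simp [Nat.card_Icc]

lemma prod_pow_factorization_of_dvd (d : Fin ℓ → ℕ) (hd : ∀ i, d i ≠ 0) {m : ℕ}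
    (hm : m ∣ (univ : Finset (Fin ℓ)).lcm d) (hm0 : m ≠ 0) :
    ∏ p ∈ ((univ : Finset (Fin ℓ)).lcm d).primeFactors, p ^ m.factorization p = m := by
  have hL : (univ : Finset (Fin ℓ)).lcm d ≠ 0 := lcm_ne_zero' hd
  have hsub : m.primeFactors ⊆ ((univ : Finset (Fin ℓ)).lcm d).primeFactors :=
    Nat.primeFactors_mono hm hL
  have h1 : ∏ p ∈ ((univ : Finset (Fin ℓ)).lcm d).primeFactors, p ^ m.factorization p
      = ∏ p ∈ m.primeFactors, p ^ m.factorization p := by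
    refine (Finset.prod_subset hsub fun p _ hp => ?_).symm
    have h0 : m.factorization p = 0 := by
      rw [← Nat.support_factorization] at hp
      exact Finsupp.notMem_support_iff.mp hp
    rw [h0, pow_zero]
  rw [h1]
  conv_rhs => rw [← Nat.factorization_prod_pow_eq_self hm0]
  rw [Finsupp.prod, Nat.support_factorization]

lemma prod_eeval_mem (d : Fin ℓ → ℕ) (hd : ∀ i, d i ≠ 0) (i : Fin ℓ) :
    ∏ S : Finset (Fin ℓ), (if i ∈ S then eeval d S else 1) = d i := by
  have h1 : ∀ S : Finset (Fin ℓ), (if i ∈ S then eeval d S else 1)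
      = ∏ p ∈ ((univ : Finset (Fin ℓ)).lcm d).primeFactors,
          p ^ (if i ∈ S then bval d p S else 0) := by
    intro S
    by_cases h : i ∈ S <;> simp [h, eeval]
  rw [Finset.prod_congr rfl fun S _ => h1 S, Finset.prod_comm]
  have h2 : ∀ p ∈ ((univ : Finset (Fin ℓ)).lcm d).primeFactors,
      (∏ S : Finset (Fin ℓ), p ^ (if i ∈ S then bval d p S else 0))
        = p ^ (d i).factorization p := by
    intro p _
    rw [Finset.prod_pow_eq_pow_sum, sum_bval d hd p i]
  rw [Finset.prod_congr rfl h2]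
  exact prod_pow_factorization_of_dvd d hd (Finset.dvd_lcm (mem_univ i)) (hd i)

lemma prod_eeval_total (d : Fin ℓ → ℕ) (hd : ∀ i, d i ≠ 0) (hl : 1 ≤ ℓ) :
    ∏ S : Finset (Fin ℓ), (if S.Nonempty then eeval d S else 1)
      = (univ : Finset (Fin ℓ)).lcm d := by
  have h1 : ∀ S : Finset (Fin ℓ), (if S.Nonempty then eeval d S else 1)
      = ∏ p ∈ ((univ : Finset (Fin ℓ)).lcm d).primeFactors,
          p ^ (if S.Nonempty then bval d p S else 0) := by
    intro S
    by_cases h : S.Nonempty <;> simp [h, eeval]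
  rw [Finset.prod_congr rfl fun S _ => h1 S, Finset.prod_comm]
  have h2 : ∀ p ∈ ((univ : Finset (Fin ℓ)).lcm d).primeFactors,
      (∏ S : Finset (Fin ℓ), p ^ (if S.Nonempty then bval d p S else 0))
        = p ^ ((univ : Finset (Fin ℓ)).lcm d).factorization p := by
    intro p _
    rw [Finset.prod_pow_eq_pow_sum, sum_bval_total d hd hl p]
  rw [Finset.prod_congr rfl h2]
  exact prod_pow_factorization_of_dvd d hd dvd_rfl (lcm_ne_zero' hd)

lemma eeval_dvd (d : Fin ℓ → ℕ) (hd : ∀ i, d i ≠ 0) {S : Finset (Fin ℓ)} {i : Fin ℓ}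
    (hi : i ∈ S) : eeval d S ∣ d i := by
  have hb : ∀ p, bval d p S ≤ (d i).factorization p := by
    intro p
    have hsub : ((Finset.Icc 1 (((univ : Finset (Fin ℓ)).lcm d).factorization p)).filter
        fun t => Sfun d p t = S) ⊆ Finset.Icc 1 ((d i).factorization p) := by
      intro t ht
      simp only [Finset.mem_filter, Finset.mem_Icc] at ht
      have hi' : i ∈ Sfun d p t := ht.2.symm ▸ hi
      simp only [Sfun, Finset.mem_filter, Finset.mem_univ, true_and] at hi'
      exact Finset.mem_Icc.mpr ⟨ht.1.1, hi'⟩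
    calc bval d p S ≤ (Finset.Icc 1 ((d i).factorization p)).card :=
          Finset.card_le_card hsub
      _ = (d i).factorization p := by rw [Nat.card_Icc]; omega
  have hdvd : eeval d S ∣ ∏ p ∈ ((univ : Finset (Fin ℓ)).lcm d).primeFactors,
      p ^ (d i).factorization p :=
    Finset.prod_dvd_prod_of_dvd _ _ fun p _ => pow_dvd_pow p (hb p)
  rwa [prod_pow_factorization_of_dvd d hd (Finset.dvd_lcm (mem_univ i)) (hd i)] at hdvd

lemma eeval_pos (d : Fin ℓ → ℕ) (S : Finset (Fin ℓ)) : 0 < eeval d S :=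
  Finset.prod_pos fun p hp => pow_pos (Nat.prime_of_mem_primeFactors hp).pos _

end LcmAux

set_option maxHeartbeats 2000000 in
/-- **Sum of reciprocals of least common multiples.**
`Σ_{1 ≤ d_1,…,d_ℓ ≤ N} 1/lcm(d_1,…,d_ℓ) ≤ (1 + log N)^{2^ℓ-1}`, and in particular
this sum is `≪_ℓ (log N)^{2^ℓ-1}`. -/
theorem lcm_reciprocal_sum (ℓ : ℕ) (hℓ : 1 ≤ ℓ) :
    (∀ N : ℕ, 2 ≤ N →
      (∑ e ∈ (Fintype.piFinset fun _ : Fin ℓ => Finset.Icc 1 N),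
          ((((univ : Finset (Fin ℓ)).lcm e : ℕ) : ℝ))⁻¹) ≤
        (1 + Real.log N) ^ (2 ^ ℓ - 1)) ∧
    ∃ C : ℝ, 0 < C ∧ ∀ N : ℕ, 2 ≤ N →
      (∑ e ∈ (Fintype.piFinset fun _ : Fin ℓ => Finset.Icc 1 N),
          ((((univ : Finset (Fin ℓ)).lcm e : ℕ) : ℝ))⁻¹) ≤
        C * Real.log N ^ (2 ^ ℓ - 1) := by
  have main : ∀ N : ℕ, 2 ≤ N →
      (∑ e ∈ (Fintype.piFinset fun _ : Fin ℓ => Finset.Icc 1 N),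
          ((((univ : Finset (Fin ℓ)).lcm e : ℕ) : ℝ))⁻¹) ≤
        (1 + Real.log N) ^ (2 ^ ℓ - 1) := by
    intro N hN
    set H : ℝ := ∑ v ∈ Finset.Icc 1 N, ((v : ℝ))⁻¹ with hH
    have hcard : Fintype.card {S : Finset (Fin ℓ) // S.Nonempty} = 2 ^ ℓ - 1 := by
      rw [Fintype.card_subtype]
      have hfe : (univ : Finset (Finset (Fin ℓ))).filter (fun S => S.Nonempty)
          = (univ : Finset (Finset (Fin ℓ))).erase ∅ := by
        ext S
        simp [Finset.nonempty_iff_ne_empty]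
      rw [hfe, Finset.card_erase_of_mem (mem_univ _), Finset.card_univ,
        Fintype.card_finset, Fintype.card_fin]
    set T := Fintype.piFinset fun _ : Fin ℓ => Finset.Icc 1 N with hT
    set E := Fintype.piFinset fun _ : {S : Finset (Fin ℓ) // S.Nonempty} => Finset.Icc 1 N
      with hE
    set ι : (Fin ℓ → ℕ) → ({S : Finset (Fin ℓ) // S.Nonempty} → ℕ) :=
      fun d S => eeval d S.1 with hι
    have hdT : ∀ d ∈ T, ∀ i, d i ≠ 0 ∧ d i ≤ N := by
      intro d hd i
      have := (Fintype.mem_piFinset.mp hd) i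
      rw [Finset.mem_Icc] at this
      omega
    have step1 : ∀ d ∈ T, ((((univ : Finset (Fin ℓ)).lcm d : ℕ) : ℝ))⁻¹
        = ∏ S : {S : Finset (Fin ℓ) // S.Nonempty}, ((ι d S : ℝ))⁻¹ := by
      intro d hd
      have hd' : ∀ i, d i ≠ 0 := fun i => (hdT d hd i).1
      have h2 : ∏ S : {S : Finset (Fin ℓ) // S.Nonempty}, ι d S
          = (univ : Finset (Fin ℓ)).lcm d := by
        simp only [hι]
        rw [← prod_eeval_total d hd' hℓ, ← Finset.prod_filter]
        exact (Finset.prod_subtype _ (fun S => by simp) (eeval d)).symm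
      rw [← h2]
      push_cast
      rw [← Finset.prod_inv_distrib]
    have hmaps : ∀ d ∈ T, ι d ∈ E := by
      intro d hd
      rw [hE, Fintype.mem_piFinset]
      intro S
      simp only [hι]
      have hd' : ∀ i, d i ≠ 0 := fun i => (hdT d hd i).1
      obtain ⟨i, hi⟩ := S.2
      have hle : eeval d S.1 ≤ d i :=
        Nat.le_of_dvd (Nat.pos_of_ne_zero (hd' i)) (eeval_dvd d hd' hi)
      rw [Finset.mem_Icc]
      exact ⟨eeval_pos d S.1, hle.trans (hdT d hd i).2⟩
    have hinj : ∀ d1 ∈ T, ∀ d2 ∈ T, ι d1 = ι d2 → d1 = d2 := by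
      intro d1 h1 d2 h2 h12
      simp only [hι, funext_iff] at h12
      funext i
      have e1 := prod_eeval_mem d1 (fun i => (hdT d1 h1 i).1) i
      have e2 := prod_eeval_mem d2 (fun i => (hdT d2 h2 i).1) i
      rw [← e1, ← e2]
      refine Finset.prod_congr rfl fun S _ => ?_
      by_cases h : i ∈ S
      · simp only [h, if_true]
        exact h12 ⟨S, ⟨i, h⟩⟩
      · simp [h]
    have hHnn : 0 ≤ H := Finset.sum_nonneg fun v _ => by positivity
    have hHle : H ≤ 1 + Real.log N := by
      have h := harmonic_le_one_add_log N
      rw [harmonic_eq_sum_Icc] at h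
      refine le_trans (le_of_eq ?_) h
      rw [hH]
      push_cast
      rfl
    calc (∑ e ∈ T, ((((univ : Finset (Fin ℓ)).lcm e : ℕ) : ℝ))⁻¹)
        = ∑ d ∈ T, ∏ S : {S : Finset (Fin ℓ) // S.Nonempty}, ((ι d S : ℝ))⁻¹ :=
          Finset.sum_congr rfl step1
      _ = ∑ y ∈ T.image ι, ∏ S : {S : Finset (Fin ℓ) // S.Nonempty}, ((y S : ℝ))⁻¹ :=
          (Finset.sum_image
            (f := fun y : {S : Finset (Fin ℓ) // S.Nonempty} → ℕ =>
              ∏ S : {S : Finset (Fin ℓ) // S.Nonempty}, ((y S : ℝ))⁻¹)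
            (g := ι) hinj).symm
      _ ≤ ∑ y ∈ E, ∏ S : {S : Finset (Fin ℓ) // S.Nonempty}, ((y S : ℝ))⁻¹ := by
          refine Finset.sum_le_sum_of_subset_of_nonneg ?_ fun y _ _ =>
            Finset.prod_nonneg fun S _ => by positivity
          intro y hy
          obtain ⟨d, hd, rfl⟩ := Finset.mem_image.mp hy
          exact hmaps d hd
      _ = ∏ _S : {S : Finset (Fin ℓ) // S.Nonempty}, H := by
          rw [hE, hH]
          exact (Finset.prod_univ_sum (fun _ => Finset.Icc 1 N)
            (fun (_ : {S : Finset (Fin ℓ) // S.Nonempty}) (v : ℕ) => ((v : ℝ))⁻¹)).symm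
      _ = H ^ (2 ^ ℓ - 1) := by rw [Finset.prod_const, Finset.card_univ, hcard]
      _ ≤ (1 + Real.log N) ^ (2 ^ ℓ - 1) := pow_le_pow_left₀ hHnn hHle _
  refine ⟨main, (1 + (Real.log 2)⁻¹) ^ (2 ^ ℓ - 1), ?_, ?_⟩
  · have h2 : 0 < Real.log 2 := Real.log_pos (by norm_num)
    positivity
  · intro N hN
    refine (main N hN).trans ?_
    rw [← mul_pow]
    have hlog2 : 0 < Real.log 2 := Real.log_pos (by norm_num)
    have hlogN : Real.log 2 ≤ Real.log N := by
      refine Real.log_le_log (by norm_num) ?_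
      exact_mod_cast hN
    have h1 : (1 : ℝ) ≤ (Real.log 2)⁻¹ * Real.log N := by
      rw [inv_mul_eq_div, le_div_iff₀ hlog2]
      linarith
    refine pow_le_pow_left₀ (by linarith) ?_ _
    calc 1 + Real.log N ≤ (Real.log 2)⁻¹ * Real.log N + Real.log N := by linarith
      _ = (1 + (Real.log 2)⁻¹) * Real.log N := by ring

end DivisorCorr
end
end

section
/- 'Rough' values of affine-linear forms are rare. Let N ≥ 3, let Ψ = (ψ_1, …, ψ_t) : ℤ^d → ℤ^t be a system of affine-linear forms whose linear coefficients are bounded in absolute value by L, let K ⊆ [−N, N]^d be a convex body with Ψ(K) ⊆ [1, N]^t, and let C_1 > 1. Then Σ_{i=1}^t Σ_{n ∈ ℤ^d ∩ K} 1_{ψ_i(n) ∈ S_1} ≪_{L,d,t,C_1} N^d (log N)^{−C_1/2}. -/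
open MeasureTheory Finset Filter
open scoped Classical BigOperators

noncomputable section

namespace DivisorCorr

/-!
A form with a nonzero coefficient at the variable `j` is injective in `n j` once the other
coordinates are fixed, so on the box `[-N, N]^d` it takes each value at most `(2N+1)^(d-1)`
times. It remains to count the `m ≤ N` in `S₁`. Put `Y = (log N)^(C₁/2)`; such an `m` is
divisible by some `p^a` with `a ≥ 2` and `p^a > Y²`. For `p ≤ Y` it is then a multiple of the
least such power of `p`, which leaves at most `N / Y²` values of `m`; for `p > Y` it is a multiple
of `p²`, which leaves at most `N / p²`, and `∑_{p > Y} p⁻² ≤ 2 / Y`. Summing over `2 ≤ p ≤ N`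
gives `#(S₁ ∩ [1, N]) ≤ 3N / Y`.
-/

lemma eq_of_sum_mul_eq_of_eq_off {ι : Type*} [Fintype ι] {a : ι → ℤ} {j : ι} (hj : a j ≠ 0)
    {n n' : ι → ℤ} (hoff : ∀ k, k ≠ j → n k = n' k)
    (h : ∑ k, a k * n k = ∑ k, a k * n' k) : n = n' := by
  have hdiff : ∑ k, a k * (n k - n' k) = a j * (n j - n' j) :=
    sum_eq_single j (fun k _ hk => by rw [hoff k hk, sub_self, mul_zero]) (by simp)
  have hj' : n j = n' j := by
    have : a j * (n j - n' j) = 0 := by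
      rw [← hdiff]
      simp only [mul_sub, sum_sub_distrib, h, sub_self]
    exact sub_eq_zero.1 ((mul_eq_zero.1 this).resolve_left hj)
  funext k
  by_cases hk : k = j
  · exact hk ▸ hj'
  · exact hoff k hk

lemma card_filter_sum_mul_add_mem_le {ι : Type*} [Fintype ι] [DecidableEq ι]
    (I : ι → Finset ℤ) {a : ι → ℤ} {j : ι} (hj : a j ≠ 0) (c : ℤ) (s : Finset ℤ) :
    #{n ∈ Fintype.piFinset I | ∑ k, a k * n k + c ∈ s} ≤ #s * ∏ k ∈ univ.erase j, #(I k) := by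
  calc #{n ∈ Fintype.piFinset I | ∑ k, a k * n k + c ∈ s}
      ≤ #(s ×ˢ Fintype.piFinset (Function.update I j {0})) := by
        refine card_le_card_of_injOn (fun n => (∑ k, a k * n k + c, Function.update n j 0)) ?_ ?_
        · intro n hn
          simp only [coe_filter, Set.mem_ofPred_eq, Fintype.mem_piFinset] at hn
          simp only [coe_product, Set.mem_prod, mem_coe, Fintype.mem_piFinset]
          refine ⟨hn.2, fun k => ?_⟩
          by_cases hk : k = j
          · subst hk; simp
          · simpa [Function.update_of_ne hk] using hn.1 k
        · intro n _ n' _ h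
          simp only [Prod.mk.injEq] at h
          refine eq_of_sum_mul_eq_of_eq_off hj (fun k hk => ?_) (by linarith [h.1])
          simpa [Function.update_of_ne hk] using congrFun h.2 k
    _ = #s * ∏ k ∈ univ.erase j, #(I k) := by
        rw [card_product, Fintype.card_piFinset, ← mul_prod_erase univ _ (mem_univ j),
          Function.update_self, card_singleton, one_mul]
        exact congrArg _ (prod_congr rfl fun k hk => by
          rw [Function.update_of_ne (ne_of_mem_erase hk)])

lemma sum_inv_sq_filter_lt_le (s : Finset ℕ) {Y : ℝ} (hY : 1 ≤ Y) :
    ∑ n ∈ s with Y < (n : ℕ), ((n : ℝ) ^ 2)⁻¹ ≤ 2 / Y := by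
  set k := ⌊Y⌋₊
  have hk : k ≠ 0 := (Nat.floor_pos.2 hY).ne'
  have hsub : {n ∈ s | Y < (n : ℕ)} ⊆ Ioc k (max k (s.sup id) : ℕ) := by
    intro n hn
    rw [mem_filter] at hn
    exact mem_Ioc.2 ⟨(Nat.floor_lt (by linarith)).2 hn.2,
      le_max_of_le_right (le_sup (f := id) hn.1)⟩
  have hYk : Y < k + 1 := Nat.lt_floor_add_one Y
  have hk1 : (1 : ℝ) ≤ k := by exact_mod_cast Nat.one_le_iff_ne_zero.2 hk
  calc ∑ n ∈ s with Y < (n : ℕ), ((n : ℝ) ^ 2)⁻¹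
      ≤ ∑ n ∈ Ioc k (max k (s.sup id) : ℕ), ((n : ℝ) ^ 2)⁻¹ :=
        sum_le_sum_of_subset_of_nonneg hsub fun _ _ _ => by positivity
    _ ≤ (k : ℝ)⁻¹ - ((max k (s.sup id) : ℕ) : ℝ)⁻¹ := sum_Ioc_inv_sq_le_sub hk (le_max_left _ _)
    _ ≤ (k : ℝ)⁻¹ := sub_le_self _ (by positivity)
    _ ≤ 2 / Y := by
        rw [inv_eq_one_div, div_le_div_iff₀ (by positivity) (by linarith)]
        linarith

lemma card_filter_natCast_le_le (M : ℕ) {Y : ℝ} (hY : 0 ≤ Y) :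
    (#{n ∈ Icc 1 M | (n : ℕ) ≤ Y} : ℝ) ≤ Y := by
  have hsub : {n ∈ Icc 1 M | (n : ℕ) ≤ Y} ⊆ Icc 1 ⌊Y⌋₊ := fun n hn => by
    rw [mem_filter, mem_Icc] at hn
    exact mem_Icc.2 ⟨hn.1.1, Nat.le_floor hn.2⟩
  calc (#{n ∈ Icc 1 M | (n : ℕ) ≤ Y} : ℝ) ≤ (⌊Y⌋₊ : ℝ) := by
        exact_mod_cast (card_le_card hsub).trans_eq (Nat.card_Icc 1 _)
    _ ≤ Y := Nat.floor_le hY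

lemma sum_inv_max_sq_le (M : ℕ) {Y : ℝ} (hY : 1 ≤ Y) :
    ∑ n ∈ Icc 1 M, (max (Y ^ 2) ((n : ℝ) ^ 2))⁻¹ ≤ 3 / Y := by
  rw [← sum_filter_add_sum_filter_not _ fun n : ℕ => (n : ℝ) ≤ Y]
  have hsmall : ∑ n ∈ Icc 1 M with (n : ℕ) ≤ Y, (max (Y ^ 2) ((n : ℝ) ^ 2))⁻¹ ≤ 1 / Y :=
    calc ∑ n ∈ Icc 1 M with (n : ℕ) ≤ Y, (max (Y ^ 2) ((n : ℝ) ^ 2))⁻¹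
        ≤ ∑ n ∈ Icc 1 M with (n : ℕ) ≤ Y, (Y ^ 2)⁻¹ :=
          sum_le_sum fun n _ => inv_anti₀ (by positivity) (le_max_left _ _)
      _ = #{n ∈ Icc 1 M | (n : ℕ) ≤ Y} * (Y ^ 2)⁻¹ := by rw [sum_const, nsmul_eq_mul]
      _ ≤ Y * (Y ^ 2)⁻¹ := by gcongr; exact card_filter_natCast_le_le M (by linarith)
      _ = 1 / Y := by field_simp
  have hlarge : ∑ n ∈ Icc 1 M with ¬(n : ℕ) ≤ Y, (max (Y ^ 2) ((n : ℝ) ^ 2))⁻¹ ≤ 2 / Y := by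
    simp_rw [not_le]
    calc ∑ n ∈ Icc 1 M with Y < (n : ℕ), (max (Y ^ 2) ((n : ℝ) ^ 2))⁻¹
        ≤ ∑ n ∈ Icc 1 M with Y < (n : ℕ), ((n : ℝ) ^ 2)⁻¹ :=
          sum_le_sum fun n hn =>
            inv_anti₀ (by nlinarith [(mem_filter.1 hn).2]) (le_max_right _ _)
      _ ≤ 2 / Y := sum_inv_sq_filter_lt_le _ hY
  calc _ ≤ 1 / Y + 2 / Y := add_le_add hsmall hlarge
    _ = 3 / Y := by ring

lemma card_filter_exists_pow_dvd_le {p : ℕ} (hp : 1 < p) (N : ℕ) (X : ℝ) :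
    (#{m ∈ Ioc 0 N | ∃ a : ℕ, 2 ≤ a ∧ X < (p : ℝ) ^ a ∧ p ^ a ∣ m} : ℝ) ≤
      N / max X ((p : ℝ) ^ 2) := by
  have hp' : (1 : ℝ) < p := by exact_mod_cast hp
  have hex : ∃ a : ℕ, 2 ≤ a ∧ X < (p : ℝ) ^ a := by
    obtain ⟨c, hc⟩ := pow_unbounded_of_one_lt X hp'
    exact ⟨max 2 c, le_max_left _ _, hc.trans_le (pow_le_pow_right₀ hp'.le (le_max_right _ _))⟩
  obtain ⟨ha₀, hXa₀⟩ := Nat.find_spec hex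
  have hsub : {m ∈ Ioc 0 N | ∃ a : ℕ, 2 ≤ a ∧ X < (p : ℝ) ^ a ∧ p ^ a ∣ m}
      ⊆ {m ∈ Ioc 0 N | p ^ Nat.find hex ∣ m} :=
    monotone_filter_right _ fun m _ ⟨a, ha, hXa, hdvd⟩ =>
      (pow_dvd_pow p (Nat.find_min' hex ⟨ha, hXa⟩)).trans hdvd
  have hmax : max X ((p : ℝ) ^ 2) ≤ (p : ℝ) ^ Nat.find hex :=
    max_le hXa₀.le (pow_le_pow_right₀ hp'.le ha₀)
  calc (#{m ∈ Ioc 0 N | ∃ a : ℕ, 2 ≤ a ∧ X < (p : ℝ) ^ a ∧ p ^ a ∣ m} : ℝ)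
      ≤ #{m ∈ Ioc 0 N | p ^ Nat.find hex ∣ m} := by exact_mod_cast card_le_card hsub
    _ = ((N / p ^ Nat.find hex : ℕ) : ℝ) := by rw [Nat.Ioc_filter_dvd_card_eq_div]
    _ ≤ N / (p : ℝ) ^ Nat.find hex := by exact_mod_cast Nat.cast_div_le
    _ ≤ N / max X ((p : ℝ) ^ 2) := div_le_div_of_nonneg_left (by positivity) (by positivity) hmax

lemma card_filter_exists_large_pow_dvd_le (N : ℕ) {Y : ℝ} (hY : 1 ≤ Y) :
    (#{m ∈ Ioc 0 N | ∃ p a : ℕ, 1 < p ∧ 2 ≤ a ∧ Y ^ 2 < (p : ℝ) ^ a ∧ p ^ a ∣ m} : ℝ) ≤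
      3 * N / Y := by
  have hcover : {m ∈ Ioc 0 N | ∃ p a : ℕ, 1 < p ∧ 2 ≤ a ∧ Y ^ 2 < (p : ℝ) ^ a ∧ p ^ a ∣ m}
      ⊆ (Icc 2 N).biUnion fun p =>
          {m ∈ Ioc 0 N | ∃ a : ℕ, 2 ≤ a ∧ Y ^ 2 < (p : ℝ) ^ a ∧ p ^ a ∣ m} := by
    intro m hm
    obtain ⟨hm, p, a, hp, ha, hYa, hdvd⟩ := mem_filter.1 hm
    have hpm : p ≤ m :=
      (Nat.le_self_pow (by omega) p).trans (Nat.le_of_dvd (mem_Ioc.1 hm).1 hdvd)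
    exact mem_biUnion.2 ⟨p, mem_Icc.2 ⟨hp, hpm.trans (mem_Ioc.1 hm).2⟩,
      mem_filter.2 ⟨hm, a, ha, hYa, hdvd⟩⟩
  calc (#{m ∈ Ioc 0 N | ∃ p a : ℕ, 1 < p ∧ 2 ≤ a ∧ Y ^ 2 < (p : ℝ) ^ a ∧ p ^ a ∣ m} : ℝ)
      ≤ ∑ p ∈ Icc 2 N,
          (#{m ∈ Ioc 0 N | ∃ a : ℕ, 2 ≤ a ∧ Y ^ 2 < (p : ℝ) ^ a ∧ p ^ a ∣ m} : ℝ) := by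
        exact_mod_cast (card_le_card hcover).trans card_biUnion_le
    _ ≤ ∑ p ∈ Icc 2 N, N / max (Y ^ 2) ((p : ℝ) ^ 2) :=
        sum_le_sum fun p hp => card_filter_exists_pow_dvd_le (mem_Icc.1 hp).1 N _
    _ ≤ ∑ p ∈ Icc 1 N, N / max (Y ^ 2) ((p : ℝ) ^ 2) :=
        sum_le_sum_of_subset_of_nonneg (Icc_subset_Icc_left one_le_two)
          fun _ _ _ => by positivity
    _ = N * ∑ p ∈ Icc 1 N, (max (Y ^ 2) ((p : ℝ) ^ 2))⁻¹ := by
        simp only [mul_sum, div_eq_mul_inv]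
    _ ≤ N * (3 / Y) := by gcongr; exact sum_inv_max_sq_le N hY
    _ = 3 * N / Y := by ring

lemma one_le_log_of_three_le {N : ℕ} (hN : 3 ≤ N) : 1 ≤ Real.log N := by
  rw [Real.le_log_iff_exp_le (by positivity)]
  have : (3 : ℝ) ≤ N := by exact_mod_cast hN
  linarith [Real.exp_one_lt_d9]

lemma card_filter_natCast_mem_S1set_le {N : ℕ} (hN : 3 ≤ N) {C₁ : ℝ} (hC₁ : 0 ≤ C₁) :
    (#{m ∈ Ioc 0 N | ((m : ℕ) : ℤ) ∈ S1set N C₁} : ℝ) ≤ 3 * N * Real.log N ^ (-(C₁ / 2)) := by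
  have hlog := one_le_log_of_three_le hN
  set Y := Real.log N ^ (C₁ / 2)
  have hY : 1 ≤ Y := Real.one_le_rpow hlog (by positivity)
  have hYsq : Y ^ 2 = Real.log N ^ C₁ := by
    rw [← Real.rpow_natCast, ← Real.rpow_mul (by linarith)]
    norm_num
  have hsub : {m ∈ Ioc 0 N | ((m : ℕ) : ℤ) ∈ S1set N C₁}
      ⊆ {m ∈ Ioc 0 N | ∃ p a : ℕ, 1 < p ∧ 2 ≤ a ∧ Y ^ 2 < (p : ℝ) ^ a ∧ p ^ a ∣ m} :=
    monotone_filter_right _ fun m _ ⟨p, a, hp, ha, hX, hdvd⟩ =>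
      ⟨p, a, hp.one_lt, ha, hYsq ▸ hX, by exact_mod_cast hdvd⟩
  calc (#{m ∈ Ioc 0 N | ((m : ℕ) : ℤ) ∈ S1set N C₁} : ℝ)
      ≤ #{m ∈ Ioc 0 N | ∃ p a : ℕ, 1 < p ∧ 2 ≤ a ∧ Y ^ 2 < (p : ℝ) ^ a ∧ p ^ a ∣ m} := by
        exact_mod_cast card_le_card hsub
    _ ≤ 3 * N / Y := card_filter_exists_large_pow_dvd_le N hY
    _ = 3 * N * Real.log N ^ (-(C₁ / 2)) := by rw [Real.rpow_neg (by linarith), div_eq_mul_inv]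

lemma psiR_intCast {d t : ℕ} (A : Fin t → Fin d → ℤ) (b : Fin t → ℤ) (i : Fin t)
    (n : Fin d → ℤ) : psiR A b i (fun j => (n j : ℝ)) = psiZ A b i n := by
  simp [psiR, psiZ]

lemma card_filter_psiZ_mem_S1set_le {d t N : ℕ} (hN : 3 ≤ N) {C₁ : ℝ} (hC₁ : 0 ≤ C₁)
    {A : Fin t → Fin d → ℤ} {b : Fin t → ℤ} {K : Set (Fin d → ℝ)} (hK : MapsIn A b N K)
    {i : Fin t} (hi : ∃ j, A i j ≠ 0) :
    (#{n ∈ pts d N K | psiZ A b i n ∈ S1set N C₁} : ℝ) ≤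
      3 ^ d * N ^ d * Real.log N ^ (-(C₁ / 2)) := by
  obtain ⟨j, hj⟩ := hi
  obtain ⟨d, rfl⟩ : ∃ d', d = d' + 1 := ⟨d - 1, by have := j.pos; omega⟩
  set s : Finset ℤ := {m ∈ Ioc 0 N | ((m : ℕ) : ℤ) ∈ S1set N C₁}.map Nat.castEmbedding
  have hsub : {n ∈ pts (d + 1) N K | psiZ A b i n ∈ S1set N C₁}
      ⊆ {n ∈ Fintype.piFinset fun _ : Fin (d + 1) => Icc (-(N : ℤ)) N |
          ∑ k, A i k * n k + b i ∈ s} := by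
    intro n hn
    obtain ⟨hnpts, hS⟩ := mem_filter.1 hn
    obtain ⟨hbox, hnK⟩ := mem_filter.1 hnpts
    have hval := hK _ hnK i
    rw [psiR_intCast, Set.mem_Icc] at hval
    have h1 : 1 ≤ psiZ A b i n := by exact_mod_cast hval.1
    have h2 : psiZ A b i n ≤ N := by exact_mod_cast hval.2
    have hcast : (((psiZ A b i n).toNat : ℕ) : ℤ) = psiZ A b i n :=
      Int.toNat_of_nonneg (by omega)
    refine mem_filter.2 ⟨hbox, mem_map.2 ⟨(psiZ A b i n).toNat, mem_filter.2
      ⟨mem_Ioc.2 ⟨by omega, by omega⟩, hcast ▸ hS⟩, hcast⟩⟩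
  have hbox : #(Icc (-(N : ℤ)) N) = 2 * N + 1 := by rw [Int.card_Icc]; omega
  have hN3 : (3 : ℝ) ≤ N := by exact_mod_cast hN
  calc (#{n ∈ pts (d + 1) N K | psiZ A b i n ∈ S1set N C₁} : ℝ)
      ≤ #s * ∏ k ∈ univ.erase j, #(Icc (-(N : ℤ)) N) := by
        exact_mod_cast (card_le_card hsub).trans (card_filter_sum_mul_add_mem_le _ hj (b i) s)
    _ = #{m ∈ Ioc 0 N | ((m : ℕ) : ℤ) ∈ S1set N C₁} * (2 * N + 1) ^ d := by
        rw [card_map, prod_const, card_erase_of_mem (mem_univ j), card_univ, Fintype.card_fin,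
          hbox, add_tsub_cancel_right]
        push_cast
        rfl
    _ ≤ (3 * N * Real.log N ^ (-(C₁ / 2))) * (3 * N) ^ d := by
        gcongr
        · exact card_filter_natCast_mem_S1set_le hN hC₁
        · linarith
    _ = 3 ^ (d + 1) * N ^ (d + 1) * Real.log N ^ (-(C₁ / 2)) := by ring

theorem rough_values_rare_general (d t L : ℕ) (ht : 0 < t)
    (C₁ : ℝ) (hC₁ : 1 < C₁) :
    ∃ C : ℝ, 0 < C ∧ ∀ N : ℕ, 3 ≤ N →
      ∀ (A : Fin t → Fin d → ℤ) (b : Fin t → ℤ), IsSystem A b → CoeffBound A L →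
      ∀ K : Set (Fin d → ℝ), Convex ℝ K → InBox d N K → MapsIn A b N K →
        (∑ i : Fin t, ∑ n ∈ pts d N K,
            if psiZ A b i n ∈ S1set N C₁ then (1 : ℝ) else 0) ≤
          C * (N : ℝ) ^ d * Real.log N ^ (-(C₁ / 2)) := by
  refine ⟨t * 3 ^ d, mul_pos (by exact_mod_cast ht) (by positivity),
    fun N hN A b hA _ K _ _ hK => ?_⟩
  calc (∑ i : Fin t, ∑ n ∈ pts d N K, if psiZ A b i n ∈ S1set N C₁ then (1 : ℝ) else 0)
      = ∑ i : Fin t, (#{n ∈ pts d N K | psiZ A b i n ∈ S1set N C₁} : ℝ) := by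
        simp only [sum_boole]
    _ ≤ ∑ _i : Fin t, 3 ^ d * (N : ℝ) ^ d * Real.log N ^ (-(C₁ / 2)) :=
        sum_le_sum fun i _ => card_filter_psiZ_mem_S1set_le hN (by linarith) hK (hA.1 i)
    _ = t * 3 ^ d * (N : ℝ) ^ d * Real.log N ^ (-(C₁ / 2)) := by
        rw [sum_const, card_univ, Fintype.card_fin, nsmul_eq_mul]
        ring

/-- **"Rough" values of affine-linear forms are rare.**
`Σ_{i ≤ t} Σ_{n ∈ ℤ^d ∩ K} 1_{ψ_i(n) ∈ S₁} ≪_{L,d,t,C₁} N^d (log N)^{-C₁/2}`. -/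
theorem rough_values_rare (d t L : ℕ) (hd : 0 < d) (ht : 0 < t) (hL : 0 < L)
    (C₁ : ℝ) (hC₁ : 1 < C₁) :
    ∃ C : ℝ, 0 < C ∧ ∀ N : ℕ, 3 ≤ N →
      ∀ (A : Fin t → Fin d → ℤ) (b : Fin t → ℤ), IsSystem A b → CoeffBound A L →
      ∀ K : Set (Fin d → ℝ), Convex ℝ K → InBox d N K → MapsIn A b N K →
        (∑ i : Fin t, ∑ n ∈ pts d N K,
            if psiZ A b i n ∈ S1set N C₁ then (1 : ℝ) else 0) ≤
          C * (N : ℝ) ^ d * Real.log N ^ (-(C₁ / 2)) :=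
  rough_values_rare_general d t L ht C₁ hC₁

end DivisorCorr
end
end
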